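/- arXiv:2605.18670 — 10 statements merged into one kernel-verified Lean document; each statement's English description precedes it below -/
import Mathlib

section
/- Let P be a probability distribution on a finite set X, let w : X → ℝ satisfy α ≤ w(x) ≤ β for all x ∈ X, where 0 < α ≤ β, set m := ∑_{x∈X} P(x)·w(x) and Q(x) := P(x)·w(x)/m. Then d_TV(P,Q) ≤ (√β − √α)/(√β + √α). In particular, if 1/(1+η) ≤ w(x) ≤ 1+η for all x ∈ X and some η ≥ 0, then d_TV(P,Q) ≤ η/(2+η). -/
theorem tv_aux
    {X : Type*} [Fintype X] (P w : X → ℝ)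
    (hP0 : ∀ x, 0 ≤ P x) (hP1 : ∑ x, P x = 1)
    (α β : ℝ) (hα : 0 < α) (hαβ : α ≤ β)
    (hwl : ∀ x, α ≤ w x) (hwu : ∀ x, w x ≤ β)
    (m : ℝ) (hm : m = ∑ x, P x * w x)
    (Q : X → ℝ) (hQ : ∀ x, Q x = P x * w x / m) :
    (1 / 2) * ∑ x, |P x - Q x| ≤
        (Real.sqrt β - Real.sqrt α) / (Real.sqrt β + Real.sqrt α) := by
  have hmα : α ≤ m := by
    rw [hm]
    calc α = ∑ x, P x * α := by rw [← Finset.sum_mul, hP1, one_mul]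
    _ ≤ ∑ x, P x * w x :=
      Finset.sum_le_sum fun x _ => mul_le_mul_of_nonneg_left (hwl x) (hP0 x)
  have hmβ : m ≤ β := by
    rw [hm]
    calc ∑ x, P x * w x ≤ ∑ x, P x * β :=
        Finset.sum_le_sum fun x _ => mul_le_mul_of_nonneg_left (hwu x) (hP0 x)
    _ = β := by rw [← Finset.sum_mul, hP1, one_mul]
  have hm0 : 0 < m := lt_of_lt_of_le hα hmα
  have hkey : ∀ x, |P x - Q x| = P x * |m - w x| / m := by
    intro x
    have h : P x - Q x = P x * (m - w x) / m := by
      rw [hQ]; field_simp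
    rw [h, abs_div, abs_of_pos hm0, abs_mul, abs_of_nonneg (hP0 x)]
  rcases eq_or_lt_of_le hαβ with heq | hlt
  · have hw : ∀ x, w x = α := fun x => le_antisymm (heq ▸ hwu x) (hwl x)
    have hmm : m = α := le_antisymm (heq ▸ hmβ) hmα
    have hz : ∀ x, |P x - Q x| = 0 := by
      intro x; rw [hkey, hw, hmm, sub_self, abs_zero, mul_zero, zero_div]
    rw [Finset.sum_congr rfl fun x _ => hz x]
    simp [← heq]
  · set s := Real.sqrt α with hs
    set t := Real.sqrt β with ht
    have hs2 : s ^ 2 = α := Real.sq_sqrt hα.le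
    have ht2 : t ^ 2 = β := Real.sq_sqrt (hα.le.trans hαβ)
    have hs0 : 0 < s := Real.sqrt_pos.2 hα
    have ht0 : 0 < t := Real.sqrt_pos.2 (hα.trans_le hαβ)
    have hst : s ≤ t := Real.sqrt_le_sqrt hαβ
    have hba : 0 < β - α := sub_pos.2 hlt
    have hchord : ∀ x, |m - w x| ≤
        ((m - α) * (β - w x) + (β - m) * (w x - α)) / (β - α) := by
      intro x
      rw [le_div_iff₀ hba]
      rcases abs_cases (m - w x) with ⟨h1, h2⟩ | ⟨h1, h2⟩ <;> rw [h1] <;>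
        nlinarith [hwl x, hwu x, mul_nonneg (sub_nonneg.2 (hwl x)) (sub_nonneg.2 hmβ),
          mul_nonneg (sub_nonneg.2 (hwu x)) (sub_nonneg.2 hmα)]
    have h1 : ∑ x, P x * (β - w x) = β - m := by
      simp only [mul_sub, Finset.sum_sub_distrib, ← Finset.mul_sum]
      rw [← hm, ← Finset.sum_mul, hP1]; ring
    have h2 : ∑ x, P x * (w x - α) = m - α := by
      simp only [mul_sub, Finset.sum_sub_distrib, ← Finset.mul_sum]
      rw [← hm, ← Finset.sum_mul, hP1]; ring
    have hsum : ∑ x, P x * (((m - α) * (β - w x) + (β - m) * (w x - α)) / (β - α)) / m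
        = 2 * (m - α) * (β - m) / ((β - α) * m) := by
      have e : ∀ x, P x * (((m - α) * (β - w x) + (β - m) * (w x - α)) / (β - α)) / m
          = ((m - α) * (P x * (β - w x)) + (β - m) * (P x * (w x - α))) / ((β - α) * m) := by
        intro x; field_simp
      rw [Finset.sum_congr rfl fun x _ => e x, ← Finset.sum_div, Finset.sum_add_distrib,
        ← Finset.mul_sum, ← Finset.mul_sum, h1, h2]
      ring
    have hbound : ∑ x, |P x - Q x| ≤ 2 * (m - α) * (β - m) / ((β - α) * m) := by
      rw [← hsum, Finset.sum_congr rfl fun x _ => hkey x]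
      apply Finset.sum_le_sum; intro x _
      gcongr
      · exact hP0 x
      · exact hchord x
    calc (1/2) * ∑ x, |P x - Q x| ≤ (1/2) * (2 * (m - α) * (β - m) / ((β - α) * m)) := by
          linarith
      _ = (m - α) * (β - m) / ((β - α) * m) := by ring
      _ ≤ (t - s) / (t + s) := by
          rw [div_le_div_iff₀ (by positivity) (by positivity), ← hs2, ← ht2]
          nlinarith [mul_nonneg (by positivity : (0:ℝ) ≤ t + s) (sq_nonneg (m - s * t))]



/-- **Total variation under bounded reweighting.**
If `α ≤ w x ≤ β` for all `x`, with `0 < α ≤ β`, `m := ∑ x, P x * w x` and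
`Q x := P x * w x / m`, then `d_TV(P,Q) ≤ (√β − √α)/(√β + √α)`.  In particular,
if `1/(1+η) ≤ w x ≤ 1+η` for some `η ≥ 0`, then `d_TV(P,Q) ≤ η/(2+η)`. -/
theorem tv_bounded_reweighting
    {X : Type*} [Fintype X] (P w : X → ℝ)
    (hP0 : ∀ x, 0 ≤ P x) (hP1 : ∑ x, P x = 1)
    (α β : ℝ) (hα : 0 < α) (hαβ : α ≤ β)
    (hwl : ∀ x, α ≤ w x) (hwu : ∀ x, w x ≤ β)
    (m : ℝ) (hm : m = ∑ x, P x * w x)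
    (Q : X → ℝ) (hQ : ∀ x, Q x = P x * w x / m) :
    (1 / 2) * ∑ x, |P x - Q x| ≤
        (Real.sqrt β - Real.sqrt α) / (Real.sqrt β + Real.sqrt α) ∧
      (∀ η : ℝ, 0 ≤ η → (∀ x, 1 / (1 + η) ≤ w x) → (∀ x, w x ≤ 1 + η) →
        (1 / 2) * ∑ x, |P x - Q x| ≤ η / (2 + η)) := by
  constructor
  · exact tv_aux P w hP0 hP1 α β hα hαβ hwl hwu m hm Q hQ
  · intro η hη hl hu
    have h1 : (0:ℝ) < 1 + η := by linarith
    have hα' : (0:ℝ) < 1 / (1 + η) := by positivity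
    have hαβ' : 1 / (1 + η) ≤ 1 + η := by
      rw [div_le_iff₀ h1]; nlinarith
    have hb := tv_aux P w hP0 hP1 (1 / (1 + η)) (1 + η) hα' hαβ' hl hu m hm Q hQ
    refine hb.trans (le_of_eq ?_)
    have hu0 : 0 < Real.sqrt (1 + η) := Real.sqrt_pos.2 h1
    have hu2 : Real.sqrt (1 + η) ^ 2 = 1 + η := Real.sq_sqrt h1.le
    have hinv : Real.sqrt (1 / (1 + η)) = 1 / Real.sqrt (1 + η) := by
      rw [one_div, one_div, Real.sqrt_inv]
    rw [hinv]
    set u := Real.sqrt (1 + η)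
    rw [div_eq_div_iff (by positivity) (by positivity : (2 + η : ℝ) ≠ 0)]
    field_simp
    nlinarith [hu2]
end

section
/- For every 0 < α ≤ β, the bound d_TV(P,Q) ≤ (√β − √α)/(√β + √α) for bounded reweightings is attained: on the two-point set X = {0,1}, take the probability distribution P with P(0) = √β/(√α+√β) and P(1) = √α/(√α+√β), take w(0) = α and w(1) = β, and set m := P(0)·α + P(1)·β and Q(x) := P(x)·w(x)/m; then m = √(αβ) and d_TV(P,Q) = (√β − √α)/(√β + √α). -/
/-! Writing `α = a²`, `β = b²`, the mean weight is `m = ab`, and reweighting by `w` merely swaps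
the two masses of `P`; the total variation distance is then `|P 0 - P 1| = (b - a)/(b + a)`. -/

open Real

lemma div_add_mul_sq_add_div_add_mul_sq_eq_mul {a b : ℝ} (hab : a + b ≠ 0) :
    b / (a + b) * a ^ 2 + a / (a + b) * b ^ 2 = a * b := by
  field_simp

lemma div_add_mul_sq_div_mul {a b : ℝ} (ha : a ≠ 0) (hb : b ≠ 0) :
    b / (a + b) * a ^ 2 / (a * b) = a / (a + b) := by
  field_simp

lemma half_sum_abs_sub_of_swap (P Q : Fin 2 → ℝ) (h0 : Q 0 = P 1) (h1 : Q 1 = P 0) :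
    1 / 2 * ∑ x, |P x - Q x| = |P 0 - P 1| := by
  rw [Fin.sum_univ_two, h0, h1, abs_sub_comm (P 1)]
  ring

/-- **Optimality of the bounded-reweighting total-variation bound.**
On the two-point set `Fin 2`, with `P 0 = √β/(√α+√β)`, `P 1 = √α/(√α+√β)`,
`w 0 = α`, `w 1 = β`, `m := P 0 · α + P 1 · β` and `Q x := P x · w x / m`, one
has `m = √(αβ)` and `d_TV(P,Q) = (√β − √α)/(√β + √α)`. -/
theorem tv_bounded_reweighting_tight
    (α β : ℝ) (hα : 0 < α) (hαβ : α ≤ β)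
    (P w : Fin 2 → ℝ)
    (hP0 : P 0 = Real.sqrt β / (Real.sqrt α + Real.sqrt β))
    (hP1 : P 1 = Real.sqrt α / (Real.sqrt α + Real.sqrt β))
    (hw0 : w 0 = α) (hw1 : w 1 = β)
    (m : ℝ) (hm : m = P 0 * α + P 1 * β)
    (Q : Fin 2 → ℝ) (hQ : ∀ x, Q x = P x * w x / m) :
    m = Real.sqrt (α * β) ∧
      (1 / 2) * ∑ x, |P x - Q x| =
        (Real.sqrt β - Real.sqrt α) / (Real.sqrt β + Real.sqrt α) := by
  have hab : √α ≤ √β := sqrt_le_sqrt hαβ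
  obtain ⟨a, ha, rfl⟩ : ∃ a, 0 < a ∧ α = a ^ 2 := ⟨√α, sqrt_pos.2 hα, (sq_sqrt hα.le).symm⟩
  obtain ⟨b, hb, rfl⟩ : ∃ b, 0 < b ∧ β = b ^ 2 :=
    ⟨√β, sqrt_pos.2 (hα.trans_le hαβ), (sq_sqrt (hα.trans_le hαβ).le).symm⟩
  simp only [sqrt_sq ha.le, sqrt_sq hb.le] at hab hP0 hP1 ⊢
  have hm' : m = a * b := by
    rw [hm, hP0, hP1, div_add_mul_sq_add_div_add_mul_sq_eq_mul (by positivity)]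
  have hQ0 : Q 0 = P 1 := by
    rw [hQ, hP0, hP1, hw0, hm', div_add_mul_sq_div_mul ha.ne' hb.ne']
  have hQ1 : Q 1 = P 0 := by
    rw [hQ, hP0, hP1, hw1, hm', mul_comm a b, add_comm a b,
      div_add_mul_sq_div_mul hb.ne' ha.ne']
  refine ⟨by rw [hm', ← mul_pow, sqrt_sq (by positivity)], ?_⟩
  rw [half_sum_abs_sub_of_swap P Q hQ0 hQ1, hP0, hP1, ← sub_div, abs_div,
    abs_of_nonneg (sub_nonneg.2 hab), abs_of_pos (by positivity), add_comm a b]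
end

section
/- Let P and Q be probability distributions on a finite set X and suppose Q is a (p,δ,Δ)-contaminated reweighting of P, witnessed by w : X → ℝ and Bad ⊆ X. Let λ := (∑_{x∈X} P(x)·w(x))⁻¹. Then 1/(1+ε(p)) ≤ λ ≤ 1+τ(p) ≤ 1+ε(p), and d_TV(P,Q) ≤ δ/(2+δ) + (1+δ)·p·Δ/(1+δp). -/
/-!
With `S = ∑ P w`, the weights are at most `1 + δ` off `Bad` and at most `1 + Δ` on it, so
`S ≤ 1 + ε(p)`; symmetrically `S ≥ (1 - p)/(1 + δ) + p/(1 + Δ) = 1/(1 + τ(p))`. Since `λ = 1/S`,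
this gives the bounds on `λ`, and `1 + τ ≤ 1 + ε` is the weighted harmonic–arithmetic mean
inequality.

For the distance, clamp `w` to `[1/(1+δ), 1+δ]`; the clamped weight `w̃` agrees with `w` off `Bad`,
and we pass through the reweighting `Q̃` of `P` by `w̃`. A variable with values in `[a, b]` and mean
`m` has mean absolute deviation at most `2 (b - m)(m - a)/(b - a)`, which for `a = 1/(1+δ)`,
`b = 1+δ` yields `d_TV(P, Q̃) ≤ δ/(2+δ)`. On `Bad` the weights `w` and `w̃` differ by a factor
at most `r = (1+Δ)/(1+δ)`, so `d_TV(Q̃, Q) ≤ (r - 1) Q̃(Bad)`, and `Q̃(Bad)` is at most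
`(1+δ)p / ((1+δ)p + (1-p)/(1+δ))` because `w̃` is bounded above on `Bad` and below elsewhere.
-/

open Finset

section Means

variable {X : Type*} [Fintype X]

theorem sum_mul_le_of_le {P v : X → ℝ} {b : ℝ} (hP0 : ∀ x, 0 ≤ P x) (hP1 : ∑ x, P x = 1)
    (hv : ∀ x, v x ≤ b) : ∑ x, P x * v x ≤ b := calc
  ∑ x, P x * v x ≤ ∑ x, P x * b := sum_le_sum fun x _ => mul_le_mul_of_nonneg_left (hv x) (hP0 x)
  _ = b := by rw [← sum_mul, hP1, one_mul]

theorem le_sum_mul_of_le {P v : X → ℝ} {a : ℝ} (hP0 : ∀ x, 0 ≤ P x) (hP1 : ∑ x, P x = 1)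
    (hv : ∀ x, a ≤ v x) : a ≤ ∑ x, P x * v x := calc
  a = ∑ x, P x * a := by rw [← sum_mul, hP1, one_mul]
  _ ≤ ∑ x, P x * v x := sum_le_sum fun x _ => mul_le_mul_of_nonneg_left (hv x) (hP0 x)

theorem sum_compl_eq_one_sub [DecidableEq X] {P : X → ℝ} (hP1 : ∑ x, P x = 1) (B : Finset X) :
    ∑ x ∈ Bᶜ, P x = 1 - ∑ x ∈ B, P x := by
  rw [← hP1, ← sum_add_sum_compl B P]; ring

theorem sum_mul_le_of_le_off [DecidableEq X] {P w : X → ℝ} {B : Finset X} {p s t : ℝ}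
    (hP0 : ∀ x, 0 ≤ P x) (hP1 : ∑ x, P x = 1) (hB : ∑ x ∈ B, P x ≤ p) (hst : s ≤ t)
    (hgood : ∀ x ∉ B, w x ≤ s) (hall : ∀ x, w x ≤ t) :
    ∑ x, P x * w x ≤ (1 - p) * s + p * t := by
  have hbad : ∑ x ∈ B, P x * w x ≤ (∑ x ∈ B, P x) * t := by
    rw [sum_mul]; exact sum_le_sum fun x _ => mul_le_mul_of_nonneg_left (hall x) (hP0 x)
  have hgood' : ∑ x ∈ Bᶜ, P x * w x ≤ (1 - ∑ x ∈ B, P x) * s := by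
    rw [← sum_compl_eq_one_sub hP1, sum_mul]
    exact sum_le_sum fun x hx => mul_le_mul_of_nonneg_left (hgood x (mem_compl.1 hx)) (hP0 x)
  rw [← sum_add_sum_compl B]
  nlinarith [mul_le_mul_of_nonneg_right hB (sub_nonneg.2 hst)]

theorem le_sum_mul_of_le_off [DecidableEq X] {P w : X → ℝ} {B : Finset X} {p s t : ℝ}
    (hP0 : ∀ x, 0 ≤ P x) (hP1 : ∑ x, P x = 1) (hB : ∑ x ∈ B, P x ≤ p) (hts : t ≤ s)
    (hgood : ∀ x ∉ B, s ≤ w x) (hall : ∀ x, t ≤ w x) :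
    (1 - p) * s + p * t ≤ ∑ x, P x * w x := by
  have := sum_mul_le_of_le_off (w := -w) hP0 hP1 hB (neg_le_neg hts)
    (fun x hx => neg_le_neg (hgood x hx)) (fun x => neg_le_neg (hall x))
  simp only [Pi.neg_apply, mul_neg, sum_neg_distrib] at this
  linarith

theorem mul_sum_mul_abs_sub_le {P v : X → ℝ} {a b : ℝ} (hP0 : ∀ x, 0 ≤ P x)
    (hP1 : ∑ x, P x = 1) (hv : ∀ x, a ≤ v x ∧ v x ≤ b) :
    (b - a) * ∑ x, P x * |v x - ∑ y, P y * v y|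
      ≤ 2 * (b - ∑ y, P y * v y) * (∑ y, P y * v y - a) := by
  set m := ∑ y, P y * v y
  have hma : a ≤ m := le_sum_mul_of_le hP0 hP1 fun x => (hv x).1
  have hmb : m ≤ b := sum_mul_le_of_le hP0 hP1 fun x => (hv x).2
  -- `|v - m|` lies below its chord over `[a, b]`, whose mean is `2 (b - m) (m - a) / (b - a)`.
  have hchord : ∀ x, (b - a) * |v x - m| ≤ (b - v x) * (m - a) + (v x - a) * (b - m) := by
    intro x
    obtain ⟨hax, hxb⟩ := hv x
    rcases le_total m (v x) with h | h
    · rw [abs_of_nonneg (sub_nonneg.2 h)]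
      nlinarith [mul_nonneg (sub_nonneg.2 hxb) (sub_nonneg.2 hma)]
    · rw [abs_of_nonpos (sub_nonpos.2 h)]
      nlinarith [mul_nonneg (sub_nonneg.2 hax) (sub_nonneg.2 hmb)]
  calc (b - a) * ∑ x, P x * |v x - m|
      ≤ ∑ x, ((m - a) * (b * P x - P x * v x) + (b - m) * (P x * v x - a * P x)) := by
        rw [mul_sum]
        refine sum_le_sum fun x _ => ?_
        nlinarith [mul_le_mul_of_nonneg_left (hchord x) (hP0 x)]
    _ = 2 * (b - m) * (m - a) := by
        simp only [sum_add_distrib, ← mul_sum, sum_sub_distrib, hP1]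
        ring

end Means

theorem one_le_div_add_div_mul_mul_add_mul {p x y : ℝ} (hp0 : 0 ≤ p) (hp1 : p ≤ 1)
    (hx : 0 < x) (hy : 0 < y) : 1 ≤ ((1 - p) / x + p / y) * ((1 - p) * x + p * y) := by
  rw [div_add_div _ _ hx.ne' hy.ne', div_mul_eq_mul_div, le_div_iff₀ (mul_pos hx hy)]
  nlinarith [mul_nonneg (mul_nonneg hp0 (sub_nonneg.2 hp1)) (sq_nonneg (x - y))]

theorem le_mul_max_min {a b r w : ℝ} (hr : 1 ≤ r) (hw0 : 0 ≤ w) (hw : w ≤ r * b) :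
    w ≤ r * max a (min b w) := by
  rcases le_total w b with h | h
  · rw [min_eq_right h]; nlinarith [le_max_right a w]
  · rw [min_eq_left h]; nlinarith [le_max_right a b]

theorem max_min_le_mul {a b r w : ℝ} (hr : 1 ≤ r) (hw0 : 0 ≤ w) (hw : a ≤ r * w) :
    max a (min b w) ≤ r * w :=
  max_le hw ((min_le_right b w).trans (le_mul_of_one_le_left hw0 hr))

theorem contamination_term_le {p δ Δ : ℝ} (hδ0 : 0 ≤ δ) (hδΔ : δ ≤ Δ) (hp0 : 0 ≤ p) :
    ((1 + Δ) / (1 + δ) - 1) * ((1 + δ) * p / ((1 + δ) * p + (1 + δ)⁻¹ * (1 - p)))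
      ≤ (1 + δ) * p * Δ / (1 + δ * p) := by
  have hδ1 : 0 < 1 + δ := by linarith
  have hden : 0 < (1 + δ) ^ 2 * p + (1 - p) := by nlinarith [mul_nonneg hp0 (mul_nonneg hδ0 hδ1.le)]
  have e : ((1 + Δ) / (1 + δ) - 1) * ((1 + δ) * p / ((1 + δ) * p + (1 + δ)⁻¹ * (1 - p)))
      = (1 + δ) * p * (Δ - δ) / ((1 + δ) ^ 2 * p + (1 - p)) := by
    field_simp
    ring
  rw [e, div_le_div_iff₀ hden (by positivity)]
  have h1 : 0 ≤ (1 + δ) * p := by positivity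
  nlinarith [mul_nonneg h1 (mul_nonneg hδ0 (mul_nonneg hp0 (sub_nonneg.2 hδΔ))),
    mul_nonneg h1 (mul_nonneg hδ0 (mul_nonneg hp0 (hδ0.trans hδΔ))), mul_nonneg h1 hδ0]

section Reweighting

variable {X : Type*} [Fintype X]

noncomputable def reweight (P w : X → ℝ) (x : X) : ℝ := P x * w x / ∑ y, P y * w y

theorem sum_reweight (P w : X → ℝ) (h : ∑ y, P y * w y ≠ 0) : ∑ x, reweight P w x = 1 := by
  simp only [reweight, ← sum_div, div_self h]

theorem reweight_nonneg {P w : X → ℝ} (hP : ∀ x, 0 ≤ P x) (hw : ∀ x, 0 ≤ w x) (x : X) :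
    0 ≤ reweight P w x :=
  div_nonneg (mul_nonneg (hP x) (hw x)) (sum_nonneg fun y _ => mul_nonneg (hP y) (hw y))

theorem sum_abs_sub_le_of_sub_le {R Q c : X → ℝ} (hsum : ∑ x, R x = ∑ x, Q x)
    (hc : ∀ x, 0 ≤ c x) (h : ∀ x, Q x - R x ≤ c x) :
    ∑ x, |R x - Q x| ≤ 2 * ∑ x, c x := by
  have hpt : ∀ x, |R x - Q x| ≤ 2 * c x - (Q x - R x) := fun x => by
    rw [abs_le]; constructor <;> linarith [hc x, h x]
  calc ∑ x, |R x - Q x| ≤ ∑ x, (2 * c x - (Q x - R x)) := sum_le_sum fun x _ => hpt x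
    _ = 2 * ∑ x, c x := by rw [sum_sub_distrib, sum_sub_distrib, hsum, ← mul_sum]; ring

theorem sum_abs_sub_reweight {P v : X → ℝ} (hP0 : ∀ x, 0 ≤ P x) (hm : 0 < ∑ y, P y * v y) :
    ∑ x, |P x - reweight P v x| = (∑ x, P x * |v x - ∑ y, P y * v y|) / ∑ y, P y * v y := by
  rw [sum_div]
  refine sum_congr rfl fun x _ => ?_
  have : P x - reweight P v x = P x * (∑ y, P y * v y - v x) / ∑ y, P y * v y := by
    rw [reweight]; field_simp
  rw [this, abs_div, abs_mul, abs_of_nonneg (hP0 x), abs_of_pos hm, abs_sub_comm]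

theorem half_sum_abs_sub_reweight_le {P v : X → ℝ} {δ : ℝ} (hP0 : ∀ x, 0 ≤ P x)
    (hP1 : ∑ x, P x = 1) (hδ : 0 ≤ δ) (hv : ∀ x, (1 + δ)⁻¹ ≤ v x ∧ v x ≤ 1 + δ) :
    1 / 2 * ∑ x, |P x - reweight P v x| ≤ δ / (2 + δ) := by
  rcases hδ.eq_or_lt with rfl | hδ
  · have hv1 : ∀ x, v x = 1 := fun x => by
      have := hv x; norm_num at this; exact le_antisymm this.2 this.1
    simp [reweight, hv1, hP1]
  have hm : 0 < ∑ y, P y * v y :=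
    (inv_pos.2 (by linarith)).trans_le (le_sum_mul_of_le hP0 hP1 fun x => (hv x).1)
  have hmad := mul_sum_mul_abs_sub_le hP0 hP1 hv
  rw [sum_abs_sub_reweight hP0 hm]
  set m := ∑ y, P y * v y
  set E := ∑ x, P x * |v x - m|
  have hb : (1 + δ) * (1 + δ)⁻¹ = 1 := mul_inv_cancel₀ (by positivity)
  generalize (1 + δ)⁻¹ = a at hmad hb
  have hkey : δ * (2 + δ) * E ≤ 2 * δ ^ 2 * m := calc
    δ * (2 + δ) * E = (1 + δ) * ((1 + δ - a) * E) := by linear_combination E * hb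
    _ ≤ (1 + δ) * (2 * (1 + δ - m) * (m - a)) := by gcongr
    _ = 2 * δ ^ 2 * m - 2 * (1 + δ) * (m - 1) ^ 2 := by linear_combination (-2 * (1 + δ - m)) * hb
    _ ≤ 2 * δ ^ 2 * m := by nlinarith [sq_nonneg (m - 1)]
  rw [show 1 / 2 * (E / m) = E / (2 * m) by ring, div_le_div_iff₀ (by positivity) (by positivity)]
  nlinarith

theorem sum_abs_reweight_sub_reweight_le [DecidableEq X] {P v w : X → ℝ} {B : Finset X} {r : ℝ}
    (hP0 : ∀ x, 0 ≤ P x) (hv : ∀ x, 0 ≤ v x) (hw : ∀ x, 0 ≤ w x)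
    (hT : 0 < ∑ y, P y * v y) (hS : 0 < ∑ y, P y * w y) (hr : 1 ≤ r)
    (hoff : ∀ x ∉ B, v x = w x) (hwv : ∀ x ∈ B, w x ≤ r * v x) (hvw : ∀ x ∈ B, v x ≤ r * w x) :
    ∑ x, |reweight P v x - reweight P w x| ≤ 2 * (r - 1) * ∑ x ∈ B, reweight P v x := by
  set c : X → ℝ := fun x => if x ∈ B then (r - 1) * reweight P v x else 0
  have hc : ∀ x, 0 ≤ c x := fun x => by
    by_cases hx : x ∈ B
    · simp only [c, if_pos hx]
      exact mul_nonneg (by linarith) (reweight_nonneg hP0 hv x)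
    · simp only [c, if_neg hx, le_refl]
  have hsum_c : ∑ x, c x = (r - 1) * ∑ x ∈ B, reweight P v x := by
    simp only [c, sum_ite_mem, univ_inter, mul_sum]
  have hsum : ∑ x, reweight P v x = ∑ x, reweight P w x := by
    rw [sum_reweight P v hT.ne', sum_reweight P w hS.ne']
  rw [mul_assoc, ← hsum_c]
  rcases le_total (∑ y, P y * v y) (∑ y, P y * w y) with h | h
  · refine sum_abs_sub_le_of_sub_le hsum hc fun x => ?_
    have hshrink : reweight P w x ≤ P x * w x / ∑ y, P y * v y :=
      div_le_div_of_nonneg_left (mul_nonneg (hP0 x) (hw x)) hT h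
    by_cases hx : x ∈ B
    · have : P x * w x / ∑ y, P y * v y ≤ r * reweight P v x := by
        rw [reweight, mul_div_assoc', mul_left_comm]
        exact div_le_div_of_nonneg_right (mul_le_mul_of_nonneg_left (hwv x hx) (hP0 x)) hT.le
      simp only [c, if_pos hx]
      linarith
    · simp only [c, if_neg hx, reweight, hoff x hx] at hshrink ⊢
      linarith
  · rw [← sum_congr rfl fun x _ => abs_sub_comm _ _]
    refine sum_abs_sub_le_of_sub_le hsum.symm hc fun x => ?_
    by_cases hx : x ∈ B
    · have hvw' : reweight P v x ≤ r * reweight P w x := calc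
        reweight P v x ≤ P x * (r * w x) / ∑ y, P y * v y :=
          div_le_div_of_nonneg_right (mul_le_mul_of_nonneg_left (hvw x hx) (hP0 x)) hT.le
        _ = r * (P x * w x / ∑ y, P y * v y) := by ring
        _ ≤ r * reweight P w x := mul_le_mul_of_nonneg_left
          (div_le_div_of_nonneg_left (mul_nonneg (hP0 x) (hw x)) hS h) (by linarith)
      have hQv := reweight_nonneg hP0 hv x
      simp only [c, if_pos hx]
      -- `Q_v - Q_w ≤ (1 - 1/r) Q_v ≤ (r - 1) Q_v`
      refine le_of_mul_le_mul_left ?_ (by linarith : 0 < r)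
      nlinarith [mul_nonneg hQv (sq_nonneg (r - 1))]
    · have : reweight P v x ≤ P x * v x / ∑ y, P y * w y :=
        div_le_div_of_nonneg_left (mul_nonneg (hP0 x) (hv x)) hS h
      simp only [c, if_neg hx, reweight, hoff x hx] at this ⊢
      linarith

theorem sum_reweight_le [DecidableEq X] {P v : X → ℝ} {B : Finset X} {a b p : ℝ}
    (hP0 : ∀ x, 0 ≤ P x) (hP1 : ∑ x, P x = 1) (ha : 0 < a) (hv : ∀ x, a ≤ v x ∧ v x ≤ b)
    (hB : ∑ x ∈ B, P x ≤ p) (hp1 : p ≤ 1) :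
    ∑ x ∈ B, reweight P v x ≤ b * p / (b * p + a * (1 - p)) := by
  set q := ∑ x ∈ B, P x
  have hq0 : 0 ≤ q := sum_nonneg fun x _ => hP0 x
  have hbad : ∑ x ∈ B, P x * v x ≤ b * q := by
    rw [mul_sum]; exact sum_le_sum fun x _ => by nlinarith [hP0 x, (hv x).2]
  have hgood : a * (1 - q) ≤ ∑ x ∈ Bᶜ, P x * v x := by
    rw [← sum_compl_eq_one_sub hP1, mul_sum]
    exact sum_le_sum fun x _ => by nlinarith [hP0 x, (hv x).1]
  have hT : a ≤ ∑ x, P x * v x := le_sum_mul_of_le hP0 hP1 fun x => (hv x).1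
  have hb : a ≤ b := hT.trans (sum_mul_le_of_le hP0 hP1 fun x => (hv x).2)
  simp only [reweight, ← sum_div]
  rw [div_le_div_iff₀ (by linarith) (by nlinarith), ← sum_add_sum_compl B fun x => P x * v x]
  nlinarith [mul_le_mul_of_nonneg_right hbad (by nlinarith : 0 ≤ a * (1 - p)),
    mul_le_mul_of_nonneg_left hB (by nlinarith : 0 ≤ b * a),
    mul_le_mul_of_nonneg_left hgood (by nlinarith : 0 ≤ b * p)]

theorem half_sum_abs_sub_reweight_le_of_contaminated [DecidableEq X] {P w : X → ℝ}
    {Bad : Finset X} {p δ Δ : ℝ} (hP0 : ∀ x, 0 ≤ P x) (hP1 : ∑ x, P x = 1) (hδ0 : 0 ≤ δ)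
    (hδΔ : δ ≤ Δ) (hp0 : 0 ≤ p) (hp1 : p ≤ 1) (hw : ∀ x, 0 < w x)
    (hgood : ∀ x ∉ Bad, 1 / (1 + δ) ≤ w x ∧ w x ≤ 1 + δ)
    (hall : ∀ x, 1 / (1 + Δ) ≤ w x ∧ w x ≤ 1 + Δ) (hBad : ∑ x ∈ Bad, P x ≤ p) :
    1 / 2 * ∑ x, |P x - reweight P w x| ≤ δ / (2 + δ) + (1 + δ) * p * Δ / (1 + δ * p) := by
  have hδ1 : 0 < 1 + δ := by linarith
  have hΔ1 : 0 < 1 + Δ := by linarith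
  set wt : X → ℝ := fun x => max (1 + δ)⁻¹ (min (1 + δ) (w x))
  set r := (1 + Δ) / (1 + δ)
  have hr : 1 ≤ r := (one_le_div hδ1).2 (by linarith)
  have hwt : ∀ x, (1 + δ)⁻¹ ≤ wt x ∧ wt x ≤ 1 + δ := fun x =>
    ⟨le_max_left _ _, max_le ((inv_le_one_of_one_le₀ (by linarith)).trans (by linarith))
      (min_le_left _ _)⟩
  have hoff : ∀ x ∉ Bad, wt x = w x := fun x hx => by
    have := hgood x hx
    rw [one_div] at this
    simp only [wt, min_eq_right this.2, max_eq_right this.1]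
  have hwv : ∀ x ∈ Bad, w x ≤ r * wt x := fun x _ =>
    le_mul_max_min hr (hw x).le (by rw [div_mul_cancel₀ _ hδ1.ne']; exact (hall x).2)
  have hvw : ∀ x ∈ Bad, wt x ≤ r * w x := fun x _ => by
    refine max_min_le_mul hr (hw x).le ?_
    calc (1 + δ)⁻¹ = r * (1 / (1 + Δ)) := by simp only [r]; field_simp
      _ ≤ r * w x := mul_le_mul_of_nonneg_left (hall x).1 (by positivity)
  have hS : 0 < ∑ x, P x * w x :=
    (one_div_pos.2 hΔ1).trans_le (le_sum_mul_of_le hP0 hP1 fun x => (hall x).1)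
  have hSt : 0 < ∑ x, P x * wt x :=
    (inv_pos.2 hδ1).trans_le (le_sum_mul_of_le hP0 hP1 fun x => (hwt x).1)
  have hclamp := half_sum_abs_sub_reweight_le hP0 hP1 hδ0 hwt
  have hbad := sum_abs_reweight_sub_reweight_le hP0 (fun x => (hwt x).1.trans' (by positivity))
    (fun x => (hw x).le) hSt hS hr hoff hwv hvw
  have hmass := sum_reweight_le hP0 hP1 (inv_pos.2 hδ1) hwt hBad hp1
  have htri : ∑ x, |P x - reweight P w x|
      ≤ ∑ x, |P x - reweight P wt x| + ∑ x, |reweight P wt x - reweight P w x| := by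
    rw [← sum_add_distrib]; exact sum_le_sum fun x _ => abs_sub_le _ _ _
  calc 1 / 2 * ∑ x, |P x - reweight P w x|
      ≤ δ / (2 + δ) + (r - 1) * ((1 + δ) * p / ((1 + δ) * p + (1 + δ)⁻¹ * (1 - p))) := by
        nlinarith [mul_le_mul_of_nonneg_left hmass (sub_nonneg.2 hr)]
    _ ≤ δ / (2 + δ) + (1 + δ) * p * Δ / (1 + δ * p) :=
        add_le_add_right (contamination_term_le hδ0 hδΔ hp0) _

end Reweighting

/-- **Elementary bounds for contaminated reweightings.**
If `Q` is a `(p,δ,Δ)`-contaminated reweighting of `P`, witnessed by `w` and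
`Bad`, and `lam := (∑ x, P x * w x)⁻¹`, then
`1/(1+ε(p)) ≤ lam ≤ 1+τ(p) ≤ 1+ε(p)` and
`d_TV(P,Q) ≤ δ/(2+δ) + (1+δ)pΔ/(1+δp)`, where `ε(p) := (1−p)δ + pΔ` and
`τ(p) := ((1−p)/(1+δ) + p/(1+Δ))⁻¹ − 1`. -/
theorem contaminated_reweighting_bounds
    {X : Type*} [Fintype X] (P Q : X → ℝ)
    (hP0 : ∀ x, 0 ≤ P x) (hP1 : ∑ x, P x = 1)
    (p δ Δ : ℝ) (hδ0 : 0 ≤ δ) (hδΔ : δ ≤ Δ) (hp0 : 0 ≤ p) (hp1 : p ≤ 1)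
    (w : X → ℝ) (Bad : Finset X)
    (hw : ∀ x, 0 < w x)
    (hQ : ∀ x, Q x = P x * w x / ∑ y, P y * w y)
    (hgood : ∀ x ∉ Bad, 1 / (1 + δ) ≤ w x ∧ w x ≤ 1 + δ)
    (hall : ∀ x, 1 / (1 + Δ) ≤ w x ∧ w x ≤ 1 + Δ)
    (hBad : ∑ x ∈ Bad, P x ≤ p)
    (lam : ℝ) (hlam : lam = (∑ x, P x * w x)⁻¹)
    (ε τ : ℝ)
    (hε : ε = (1 - p) * δ + p * Δ)
    (hτ : τ = ((1 - p) / (1 + δ) + p / (1 + Δ))⁻¹ - 1) :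
    (1 / (1 + ε) ≤ lam ∧ lam ≤ 1 + τ ∧ 1 + τ ≤ 1 + ε) ∧
      (1 / 2) * ∑ x, |P x - Q x| ≤
        δ / (2 + δ) + (1 + δ) * p * Δ / (1 + δ * p) := by
  classical
  have hδ1 : 0 < 1 + δ := by linarith
  have hΔ1 : 0 < 1 + Δ := by linarith
  have hε' : 1 + ε = (1 - p) * (1 + δ) + p * (1 + Δ) := by rw [hε]; ring
  have hS_le : ∑ x, P x * w x ≤ (1 - p) * (1 + δ) + p * (1 + Δ) :=
    sum_mul_le_of_le_off hP0 hP1 hBad (by linarith) (fun x hx => (hgood x hx).2) fun x =>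
      (hall x).2
  have hS_ge : (1 - p) / (1 + δ) + p / (1 + Δ) ≤ ∑ x, P x * w x := by
    simpa only [mul_one_div] using le_sum_mul_of_le_off hP0 hP1 hBad
      (one_div_le_one_div_of_le hδ1 (by linarith)) (fun x hx => (hgood x hx).1) fun x =>
        (hall x).1
  have hHM := one_le_div_add_div_mul_mul_add_mul hp0 hp1 hδ1 hΔ1
  have hD : 0 < (1 - p) / (1 + δ) + p / (1 + Δ) := by
    nlinarith [mul_nonneg (sub_nonneg.2 hp1) hδ1.le, mul_nonneg hp0 hΔ1.le]
  refine ⟨⟨?_, ?_, ?_⟩, ?_⟩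
  · rw [hlam, one_div, hε']; exact inv_anti₀ (hD.trans_le hS_ge) hS_le
  · rw [hlam, hτ, add_sub_cancel]; exact inv_anti₀ hD hS_ge
  · rw [hτ, hε', add_sub_cancel]; exact (inv_le_iff_one_le_mul₀' hD).2 hHM
  · rw [funext hQ]
    exact half_sum_abs_sub_reweight_le_of_contaminated hP0 hP1 hδ0 hδΔ hp0 hp1 hw hgood hall hBad
end

section
/- Let P and Q be probability distributions on a finite set X, let 0 ≤ δ ≤ Δ, p ∈ [0,1], and set ε(p) := (1−p)δ + pΔ. Suppose that either Q is a (p,δ,Δ)-contaminated reweighting of P, or P is a (p,δ,Δ)-contaminated reweighting of Q. Then for every x ∈ X, Q(x) ≤ (1+Δ)(1+ε(p))·P(x) and P(x) ≤ (1+Δ)(1+ε(p))·Q(x). Consequently, if P is the uniform distribution on X, then for every x ∈ X, 1/(|X|·(1+η)) ≤ Q(x) ≤ (1+η)/|X| with η := (1+Δ)(1+ε(p)) − 1, and moreover η ≤ (1+Δ)² − 1. -/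
open Finset

/-- `Q` is a `(p,δ,Δ)`-contaminated reweighting of `P` on the finite set `X`. -/
def IsContaminatedReweighting {X : Type*} [Fintype X]
    (P Q : X → ℝ) (p δ Δ : ℝ) : Prop :=
  ∃ (w : X → ℝ) (Bad : Finset X),
    (∀ x, 0 < w x) ∧
    (∀ x, Q x = P x * w x / ∑ y, P y * w y) ∧
    (∀ x ∉ Bad, 1 / (1 + δ) ≤ w x ∧ w x ≤ 1 + δ) ∧
    (∀ x, 1 / (1 + Δ) ≤ w x ∧ w x ≤ 1 + Δ) ∧
    ∑ x ∈ Bad, P x ≤ p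

lemma key_bound {X : Type*} [Fintype X] (P Q : X → ℝ)
    (hP0 : ∀ x, 0 ≤ P x) (hP1 : ∑ x, P x = 1) (hQ0 : ∀ x, 0 ≤ Q x)
    (p δ Δ ε : ℝ) (hδ0 : 0 ≤ δ) (hδΔ : δ ≤ Δ) (hp0 : 0 ≤ p) (hp1 : p ≤ 1)
    (hε : ε = (1 - p) * δ + p * Δ)
    (h : IsContaminatedReweighting P Q p δ Δ) :
    ∀ x, Q x ≤ (1 + Δ) * (1 + ε) * P x ∧ P x ≤ (1 + Δ) * (1 + ε) * Q x := by
  classical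
  obtain ⟨w, Bad, hw0, hQdef, hgood, hall, hbadp⟩ := h
  have hδpos : (0:ℝ) < 1 + δ := by linarith
  have hΔpos : (0:ℝ) < 1 + Δ := by linarith
  have hεpos : (0:ℝ) < 1 + ε := by nlinarith
  set S := ∑ y, P y * w y with hS
  set a := ∑ x ∈ Bad, P x with ha
  have ha0 : 0 ≤ a := Finset.sum_nonneg fun x _ => hP0 x
  have hsplit : a + ∑ x ∈ Badᶜ, P x = 1 := by
    rw [ha, Finset.sum_add_sum_compl, hP1]
  have hap1 : a ≤ 1 := le_trans hbadp hp1
  have hSsplit : (∑ x ∈ Bad, P x * w x) + ∑ x ∈ Badᶜ, P x * w x = S := by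
    rw [hS, Finset.sum_add_sum_compl]
  -- upper bound on S
  have hSub : S ≤ a * (1 + Δ) + (1 - a) * (1 + δ) := by
    have h1 : ∑ x ∈ Bad, P x * w x ≤ ∑ x ∈ Bad, P x * (1 + Δ) :=
      Finset.sum_le_sum fun x _ => mul_le_mul_of_nonneg_left (hall x).2 (hP0 x)
    have h2 : ∑ x ∈ Badᶜ, P x * w x ≤ ∑ x ∈ Badᶜ, P x * (1 + δ) :=
      Finset.sum_le_sum fun x hx =>
        mul_le_mul_of_nonneg_left (hgood x (Finset.mem_compl.mp hx)).2 (hP0 x)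
    rw [← Finset.sum_mul] at h1 h2
    have hcompl : ∑ x ∈ Badᶜ, P x = 1 - a := by linarith
    rw [hcompl] at h2
    rw [← hSsplit]
    linarith
  -- lower bound on S
  have hSlb : a * (1 / (1 + Δ)) + (1 - a) * (1 / (1 + δ)) ≤ S := by
    have h1 : ∑ x ∈ Bad, P x * (1 / (1 + Δ)) ≤ ∑ x ∈ Bad, P x * w x :=
      Finset.sum_le_sum fun x _ => mul_le_mul_of_nonneg_left (hall x).1 (hP0 x)
    have h2 : ∑ x ∈ Badᶜ, P x * (1 / (1 + δ)) ≤ ∑ x ∈ Badᶜ, P x * w x :=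
      Finset.sum_le_sum fun x hx =>
        mul_le_mul_of_nonneg_left (hgood x (Finset.mem_compl.mp hx)).1 (hP0 x)
    rw [← Finset.sum_mul] at h1 h2
    have hcompl : ∑ x ∈ Badᶜ, P x = 1 - a := by linarith
    rw [hcompl] at h2
    rw [← hSsplit]
    linarith
  have hSle : S ≤ 1 + ε := by nlinarith [mul_nonneg (sub_nonneg.mpr hbadp) (sub_nonneg.mpr hδΔ)]
  have hSge : 1 ≤ S * (1 + ε) := by
    have hkey : (1 + Δ) * (1 + δ) ≤ (a * (1 + δ) + (1 - a) * (1 + Δ)) * (1 + ε) := by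
      nlinarith [mul_nonneg (mul_nonneg (sub_nonneg.mpr hδΔ) (sub_nonneg.mpr hbadp)) hδpos.le,
        mul_nonneg (mul_nonneg (sub_nonneg.mpr hδΔ) (mul_nonneg hp0 (sub_nonneg.mpr hδΔ))) (sub_nonneg.mpr hap1)]
    have hLeq : a * (1 / (1 + Δ)) + (1 - a) * (1 / (1 + δ))
        = (a * (1 + δ) + (1 - a) * (1 + Δ)) / ((1 + Δ) * (1 + δ)) := by
      field_simp
    have hL1 : 1 ≤ (a * (1 / (1 + Δ)) + (1 - a) * (1 / (1 + δ))) * (1 + ε) := by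
      rw [hLeq, div_mul_eq_mul_div, le_div_iff₀ (by positivity)]
      linarith
    nlinarith [hSlb, hεpos]
  have hS0 : 0 < S := by nlinarith
  intro x
  have hxeq : Q x * S = P x * w x := by
    rw [hQdef x, div_mul_cancel₀ _ hS0.ne']
  constructor
  · have h1 : Q x * S ≤ ((1 + Δ) * (1 + ε) * P x) * S := by
      nlinarith [mul_le_mul_of_nonneg_left (hall x).2 (hP0 x),
        mul_le_mul_of_nonneg_left hSge (mul_nonneg (hP0 x) hΔpos.le), hP0 x]
    exact le_of_mul_le_mul_right h1 hS0
  · have hw1 : 1 ≤ w x * (1 + Δ) := by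
      have := (hall x).1
      rw [div_le_iff₀ hΔpos] at this
      linarith [this]
    nlinarith [hxeq, hP0 x, hQ0 x, mul_le_mul_of_nonneg_left hSle (hQ0 x), hP0 x,
      mul_le_mul_of_nonneg_left hw1 (hP0 x)]

/-- **Reverse-direction max-divergence from contaminated reweighting.**
If `Q` is a `(p,δ,Δ)`-contaminated reweighting of `P`, or `P` one of `Q`, then
`Q x ≤ (1+Δ)(1+ε(p)) P x` and `P x ≤ (1+Δ)(1+ε(p)) Q x` for every `x`.
Consequently, if `P` is uniform, then `Q` is `η`-close-to-uniform with
`η := (1+Δ)(1+ε(p)) − 1 ≤ (1+Δ)² − 1`, where `ε(p) := (1−p)δ + pΔ`. -/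
theorem reverse_max_divergence
    {X : Type*} [Fintype X] (P Q : X → ℝ)
    (hP0 : ∀ x, 0 ≤ P x) (hP1 : ∑ x, P x = 1)
    (hQ0 : ∀ x, 0 ≤ Q x) (hQ1 : ∑ x, Q x = 1)
    (p δ Δ : ℝ) (hδ0 : 0 ≤ δ) (hδΔ : δ ≤ Δ) (hp0 : 0 ≤ p) (hp1 : p ≤ 1)
    (hcr : IsContaminatedReweighting P Q p δ Δ ∨
           IsContaminatedReweighting Q P p δ Δ)
    (ε η : ℝ)
    (hε : ε = (1 - p) * δ + p * Δ)
    (hη : η = (1 + Δ) * (1 + ε) - 1) :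
    (∀ x, Q x ≤ (1 + Δ) * (1 + ε) * P x ∧ P x ≤ (1 + Δ) * (1 + ε) * Q x) ∧
      ((∀ x, P x = 1 / (Fintype.card X : ℝ)) →
        ∀ x, 1 / ((Fintype.card X : ℝ) * (1 + η)) ≤ Q x ∧
          Q x ≤ (1 + η) / (Fintype.card X : ℝ)) ∧
      η ≤ (1 + Δ) ^ 2 - 1 := by
  have hεΔ : ε ≤ Δ := by nlinarith
  have hε0 : 0 ≤ ε := by nlinarith
  have hmain : ∀ x, Q x ≤ (1 + Δ) * (1 + ε) * P x ∧ P x ≤ (1 + Δ) * (1 + ε) * Q x := by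
    rcases hcr with h | h
    · exact key_bound P Q hP0 hP1 hQ0 p δ Δ ε hδ0 hδΔ hp0 hp1 hε h
    · intro x
      exact (key_bound Q P hQ0 hQ1 hP0 p δ Δ ε hδ0 hδΔ hp0 hp1 hε h x).symm
  refine ⟨hmain, ?_, by nlinarith⟩
  intro hPu x
  have hX : Nonempty X := by
    by_contra h
    rw [not_nonempty_iff] at h
    rw [Finset.univ_eq_empty, Finset.sum_empty] at hP1
    exact one_ne_zero hP1.symm
  have hn : 0 < (Fintype.card X : ℝ) := by
    exact_mod_cast Fintype.card_pos
  have hηpos : 0 < 1 + η := by nlinarith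
  obtain ⟨h1, h2⟩ := hmain x
  rw [hPu x] at h1 h2
  set n := (Fintype.card X : ℝ) with hndef
  have hc : (1 + Δ) * (1 + ε) * (1 / n) * n = (1 + Δ) * (1 + ε) := by
    field_simp
  have hub : Q x * n ≤ 1 + η := by
    have := mul_le_mul_of_nonneg_right h1 hn.le
    rw [hc] at this
    linarith
  have hlb : 1 ≤ (1 + Δ) * (1 + ε) * Q x * n := by
    have := mul_le_mul_of_nonneg_right h2 hn.le
    rw [one_div, inv_mul_cancel₀ hn.ne'] at this
    linarith
  constructor
  · rw [div_le_iff₀ (by positivity)]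
    subst hη
    nlinarith [hlb]
  · rw [le_div_iff₀ hn]
    exact hub
end

section
/- In the ballot-discrepancy setting, the average discrepancy under the uniform distribution on ballots satisfies (1/N)·∑_{b∈B} D(b) ≥ Δ_T/N − 2κ − max(λ − 1, 0). -/
open Finset

/-!
Write `D b = 1 + h (ident b) - marg b`, where `h ι = v ι - 1` on rows of `T` and `h ι = 0`
elsewhere, so that `-2 ≤ h ≤ 0`. Summing `h ∘ ident` over the ballots counts every row of the
image `S := ident '' B` once, plus `N - |S|` surplus copies, each of which contributes at least
`-2`; this is the `-2κ`. Counting each row of `S` once gives at least `∑_{ι ∈ T} v ι - M`, since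
the rows of `T \ S` only contribute nonpositive terms. What remains is `N - M ≥ -(M - N)₊`.
-/

section Multiplicity

variable {R B I : Type*} [CommRing R] [LinearOrder R] [IsStrictOrderedRing R] [DecidableEq I]

/-- Each point of `s` beyond the first in a fibre of `k` costs at most `a`. -/
theorem sum_image_sub_mul_card_sub_le_sum_comp (s : Finset B) (k : B → I) (g : I → R) (a : R)
    (hg : ∀ b ∈ s, -a ≤ g (k b)) :
    ∑ ι ∈ s.image k, g ι - a * ((#s : R) - #(s.image k)) ≤ ∑ b ∈ s, g (k b) := by
  have hcard : (#s : R) = ∑ ι ∈ s.image k, (#{b ∈ s | k b = ι} : R) := by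
    exact_mod_cast card_eq_sum_card_image k s
  rw [sum_comp g k, hcard, cast_card (s.image k), ← sum_sub_distrib, mul_sum, ← sum_sub_distrib]
  refine sum_le_sum fun ι hι => ?_
  obtain ⟨b, hb, rfl⟩ := mem_image.mp hι
  have hfibre : (1 : R) ≤ #{b' ∈ s | k b' = k b} := by
    exact_mod_cast (card_pos.mpr ⟨b, mem_filter.mpr ⟨hb, rfl⟩⟩ : 0 < #{b' ∈ s | k b' = k b})
  rw [nsmul_eq_mul]
  nlinarith [hg b hb]

theorem sum_le_sum_ite_mem_of_nonpos {M : Type*} [AddCommMonoid M] [PartialOrder M]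
    [IsOrderedAddMonoid M] (S T : Finset I) (w : I → M) (hw : ∀ ι ∈ T, w ι ≤ 0) :
    ∑ ι ∈ T, w ι ≤ ∑ ι ∈ S, if ι ∈ T then w ι else 0 := by
  rw [sum_ite_mem, inter_comm, ← sum_inter_add_sum_sdiff T S w]
  exact add_le_of_nonpos_right (sum_nonpos fun ι hι => hw ι (mem_sdiff.mp hι).1)

theorem sum_sub_card_sub_two_mul_le_sum_ite_mem_comp [Fintype B] (k : B → I) (T : Finset I)
    (v : I → R) (hv : ∀ ι ∈ T, |v ι| ≤ 1) :
    ∑ ι ∈ T, v ι - #T - 2 * ((Fintype.card B : R) - #(univ.image k)) ≤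
      ∑ b, if k b ∈ T then v (k b) - 1 else 0 := by
  have hdup := sum_image_sub_mul_card_sub_le_sum_comp univ k
    (fun ι => if ι ∈ T then v ι - 1 else 0) 2 fun b _ => by
      split_ifs with hb
      · linarith [(abs_le.mp (hv _ hb)).1]
      · norm_num
  have hrows := sum_le_sum_ite_mem_of_nonpos (univ.image k) T (fun ι => v ι - 1)
    fun ι hι => by linarith [(abs_le.mp (hv ι hι)).2]
  rw [card_univ] at hdup
  rw [sum_sub_distrib, sum_const, nsmul_one] at hrows
  linarith

end Multiplicity

theorem uniform_ballot_lower_bound_general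
    {B I : Type*} [Fintype B] [Nonempty B] [DecidableEq I]
    (ident : B → I)
    (marg : B → ℤ)
    (T : Finset I)
    (v : I → ℤ) (hv : ∀ ι ∈ T, v ι = -1 ∨ v ι = 0 ∨ v ι = 1)
    (D : B → ℤ)
    (hD : ∀ b, D b = if ident b ∈ T then v (ident b) - marg b else 1 - marg b)
    (N M : ℕ) (hN : N = Fintype.card B) (hM : M = T.card)
    (lam κ : ℝ)
    (hlam : lam = (M : ℝ) / (N : ℝ))
    (hκ : κ = ((N : ℝ) - ((Finset.univ.image ident).card : ℝ)) / (N : ℝ))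
    (ΔT : ℤ) (hΔT : ΔT = ∑ ι ∈ T, v ι - ∑ b, marg b) :
    (1 / (N : ℝ)) * ∑ b, (D b : ℝ) ≥
      (ΔT : ℝ) / (N : ℝ) - 2 * κ - max (lam - 1) 0 := by
  set S := univ.image ident
  have hDsum : ∑ b, D b =
      N + ∑ b, (if ident b ∈ T then v (ident b) - 1 else 0) - ∑ b, marg b := by
    rw [hN, ← card_univ, card_eq_sum_ones, Nat.cast_sum, ← sum_add_distrib, ← sum_sub_distrib]
    refine sum_congr rfl fun b _ => ?_
    rw [hD b]
    split_ifs <;> ring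
  have hcore := sum_sub_card_sub_two_mul_le_sum_ite_mem_comp ident T v fun ι hι => by
    rcases hv ι hι with hvι | hvι | hvι <;> simp [hvι]
  have hint : (ΔT : ℝ) - 2 * ((N : ℝ) - #S) - max ((M : ℝ) - N) 0 ≤ ∑ b, (D b : ℝ) := by
    have : ΔT - 2 * ((N : ℤ) - #S) + (N - M) ≤ ∑ b, D b := by rw [hN, hM]; linarith
    have : (ΔT : ℝ) - 2 * ((N : ℝ) - #S) + (N - M) ≤ ∑ b, (D b : ℝ) := by exact_mod_cast this
    linarith [le_max_left ((M : ℝ) - N) 0]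
  have hNpos : (0 : ℝ) < N := by rw [hN]; exact_mod_cast Fintype.card_pos
  have hmax : max (lam - 1) 0 = max ((M : ℝ) - N) 0 / N := by
    rw [← max_div_div_right hNpos.le, zero_div, hlam, sub_div, div_self hNpos.ne']
  rw [hmax, hκ, ge_iff_le, one_div, inv_mul_eq_div, ← mul_div_assoc, ← sub_div, ← sub_div]
  exact div_le_div_of_nonneg_right hint hNpos.le

/-- **Uniform-ballot lower bound.**
In the ballot-discrepancy setting, the average discrepancy under the uniform
distribution on ballots satisfies
`(1/N) ∑_b D(b) ≥ Δ_T/N − 2κ − (λ − 1)₊`. -/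
theorem uniform_ballot_lower_bound
    {B I : Type*} [Fintype B] [Nonempty B] [DecidableEq I]
    (ident : B → I)
    (marg : B → ℤ) (hmarg : ∀ b, marg b = -1 ∨ marg b = 0 ∨ marg b = 1)
    (T : Finset I)
    (v : I → ℤ) (hv : ∀ ι ∈ T, v ι = -1 ∨ v ι = 0 ∨ v ι = 1)
    (D : B → ℤ)
    (hD : ∀ b, D b = if ident b ∈ T then v (ident b) - marg b else 1 - marg b)
    (N M : ℕ) (hN : N = Fintype.card B) (hM : M = T.card)
    (lam κ : ℝ)
    (hlam : lam = (M : ℝ) / (N : ℝ))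
    (hκ : κ = ((N : ℝ) - ((Finset.univ.image ident).card : ℝ)) / (N : ℝ))
    (ΔT : ℤ) (hΔT : ΔT = ∑ ι ∈ T, v ι - ∑ b, marg b) :
    (1 / (N : ℝ)) * ∑ b, (D b : ℝ) ≥
      (ΔT : ℝ) / (N : ℝ) - 2 * κ - max (lam - 1) 0 :=
  uniform_ballot_lower_bound_general ident marg T v hv D hD N M hN hM lam κ hlam hκ ΔT hΔT
end

section
/- In the ballot-discrepancy setting, let π be any probability distribution on B and let U be the uniform distribution on B. Then ∑_{b∈B} π(b)·D(b) ≥ Δ_T/N − 2κ − max(λ − 1, 0) − 4·d_TV(π, U). In particular, if Δ_T ≥ μ·M for some real μ, then ∑_{b∈B} π(b)·D(b) ≥ μ·λ − 2κ − max(λ − 1, 0) − 4·d_TV(π, U). -/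
/-!
Charge every ballot whose identifier has no CVR row the worst case `1`. Summing the discrepancy
over the ballots then counts each identifier of `id(B)` once, plus a duplicate charge of at least
`-1` for each of the `N - |id(B)|` repeated ballots; comparing the identifiers of `id(B)` with the
rows `T` costs at most `|T| - |id(B)|`. Hence `∑_b D(b) ≥ Δ_T - 2(N - |id(B)|) + (N - M)`, i.e. the
uniform average of `D` is at least `Δ_T/N - 2κ - (λ - 1)`. Since `|D| ≤ 2`, moving from `U` to `π`
changes the average by at most `2 ∑_b |π(b) - U(b)| = 4 d_TV(π, U)`.
-/

open Finset

section General

variable {ι κ R : Type*}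

theorem Finset.sum_image_add_card_smul_le [DecidableEq κ] [AddCommGroup R] [PartialOrder R]
    [IsOrderedAddMonoid R] (s : Finset ι) (g : ι → κ) {h : κ → R} {c : R}
    (hc : ∀ u ∈ s.image g, c ≤ h u) :
    ∑ u ∈ s.image g, h u + #s • c ≤ ∑ x ∈ s, h (g x) + #(s.image g) • c := by
  have h_shift := sum_image_le_of_nonneg (f := fun u => h u - c) fun u hu => sub_nonneg.2 (hc u hu)
  simp only [sum_sub_distrib, sum_const] at h_shift
  rwa [sub_le_iff_le_add, sub_add_eq_add_sub, le_sub_iff_add_le] at h_shift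

theorem Finset.sum_mul_sub_mul_sum_abs_sub_le [CommRing R] [LinearOrder R] [IsStrictOrderedRing R]
    (s : Finset ι) (p q f : ι → R) {C : R} (hf : ∀ i ∈ s, |f i| ≤ C) :
    ∑ i ∈ s, q i * f i - C * ∑ i ∈ s, |p i - q i| ≤ ∑ i ∈ s, p i * f i := by
  rw [mul_sum, ← sum_sub_distrib]
  refine sum_le_sum fun i hi => ?_
  have h_term : -((p i - q i) * f i) ≤ |p i - q i| * C :=
    (neg_le_abs _).trans <| (abs_mul _ _).trans_le <|
      mul_le_mul_of_nonneg_left (hf i hi) (abs_nonneg _)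
  linarith

end General

section Ballot

variable {B I : Type*} [DecidableEq I]

def cvrValue (T : Finset I) (v : I → ℤ) (ι : I) : ℤ :=
  if ι ∈ T then v ι else 1

theorem abs_cvrValue_le_one {T : Finset I} {v : I → ℤ} (hv : ∀ ι ∈ T, |v ι| ≤ 1) (ι : I) :
    |cvrValue T v ι| ≤ 1 := by
  unfold cvrValue
  split_ifs with h
  exacts [hv ι h, le_rfl]

theorem sum_add_card_le_sum_cvrValue_add_card (S T : Finset I) {v : I → ℤ}
    (hv : ∀ ι ∈ T, v ι ≤ 1) :
    ∑ ι ∈ T, v ι + #S ≤ ∑ ι ∈ S, cvrValue T v ι + #T := by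
  have h_excess : ∑ ι ∈ S, (cvrValue T v ι - 1) = ∑ ι ∈ S ∩ T, (v ι - 1) := by
    rw [← sum_ite_mem]
    exact sum_congr rfl fun ι _ => by unfold cvrValue; split_ifs <;> simp
  have h_sub : ∑ ι ∈ T, (v ι - 1) ≤ ∑ ι ∈ S ∩ T, (v ι - 1) :=
    sum_le_sum_of_subset_of_nonpos' inter_subset_right fun ι hι _ => by linarith [hv ι hι]
  simp only [sum_sub_distrib, sum_const, nsmul_one] at h_excess h_sub
  linarith

theorem sum_sub_sum_add_two_mul_card_image_le [Fintype B] (ident : B → I) (marg : B → ℤ)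
    (T : Finset I) {v : I → ℤ} (hv : ∀ ι ∈ T, |v ι| ≤ 1) :
    ∑ ι ∈ T, v ι - ∑ b, marg b + 2 * #(univ.image ident)
      ≤ ∑ b, (cvrValue T v (ident b) - marg b) + Fintype.card B + #T := by
  have h_fibres := sum_image_add_card_smul_le univ ident (h := cvrValue T v) (c := -1)
    fun ι _ => (abs_le.1 (abs_cvrValue_le_one hv ι)).1
  have h_rows := sum_add_card_le_sum_cvrValue_add_card (univ.image ident) T
    fun ι hι => (abs_le.1 (hv ι hι)).2
  simp only [card_univ, smul_neg, nsmul_one] at h_fibres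
  rw [sum_sub_distrib]
  linarith

end Ballot

theorem general_ballot_law_lower_bound_general
    {B I : Type*} [Fintype B] [Nonempty B] [DecidableEq I]
    (ident : B → I)
    (marg : B → ℤ) (hmarg : ∀ b, marg b = -1 ∨ marg b = 0 ∨ marg b = 1)
    (T : Finset I)
    (v : I → ℤ) (hv : ∀ ι ∈ T, v ι = -1 ∨ v ι = 0 ∨ v ι = 1)
    (D : B → ℤ)
    (hD : ∀ b, D b = if ident b ∈ T then v (ident b) - marg b else 1 - marg b)
    (N M : ℕ) (hN : N = Fintype.card B) (hM : M = T.card)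
    (lam κ : ℝ)
    (hlam : lam = (M : ℝ) / (N : ℝ))
    (hκ : κ = ((N : ℝ) - ((Finset.univ.image ident).card : ℝ)) / (N : ℝ))
    (ΔT : ℤ) (hΔT : ΔT = ∑ ι ∈ T, v ι - ∑ b, marg b)
    (π : B → ℝ)
    (U : B → ℝ) (hU : ∀ b, U b = 1 / (N : ℝ)) :
    (∑ b, π b * (D b : ℝ) ≥
        (ΔT : ℝ) / (N : ℝ) - 2 * κ - max (lam - 1) 0 -
          4 * ((1 / 2) * ∑ b, |π b - U b|)) ∧
      (∀ μ : ℝ, (ΔT : ℝ) ≥ μ * (M : ℝ) →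
        ∑ b, π b * (D b : ℝ) ≥
          μ * lam - 2 * κ - max (lam - 1) 0 -
            4 * ((1 / 2) * ∑ b, |π b - U b|)) := by
  have hN_pos : (0 : ℝ) < N := by rw [hN]; exact_mod_cast Fintype.card_pos
  have hv' : ∀ ι ∈ T, |v ι| ≤ 1 := fun ι hι => by rcases hv ι hι with h | h | h <;> simp [h]
  have hmarg' : ∀ b, |marg b| ≤ 1 := fun b => by rcases hmarg b with h | h | h <;> simp [h]
  have hD_cvr : ∀ b, D b = cvrValue T v (ident b) - marg b := fun b => by
    rw [hD, cvrValue, ite_sub]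
  have h_sum : ΔT + 2 * (#(univ.image ident) : ℤ) ≤ ∑ b, D b + N + M := by
    simpa only [hΔT, hN, hM, hD_cvr] using sum_sub_sum_add_two_mul_card_image_le ident marg T hv'
  have h_mean : (ΔT : ℝ) / N - 2 * κ - max (lam - 1) 0 ≤ ∑ b, U b * D b := by
    have h_sum_real : (ΔT : ℝ) - 2 * (N - #(univ.image ident)) - (M - N) ≤ ∑ b, (D b : ℝ) := by
      exact_mod_cast (by linarith : ΔT - 2 * (N - (#(univ.image ident) : ℤ)) - (M - N) ≤ ∑ b, D b)
    have h_eq : (ΔT : ℝ) / N - 2 * κ - (lam - 1)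
        = ((ΔT : ℝ) - 2 * (N - #(univ.image ident)) - (M - N)) / N := by
      rw [hκ, hlam]; field_simp
    simp only [hU, one_div_mul_eq_div, ← sum_div]
    linarith [div_le_div_of_nonneg_right h_sum_real hN_pos.le, le_max_left (lam - 1) 0]
  have hD_abs : ∀ b ∈ univ, |(D b : ℝ)| ≤ 2 := fun b _ => by
    rw [← Int.cast_abs, hD_cvr]
    exact_mod_cast (abs_sub _ _).trans (by linarith [abs_cvrValue_le_one hv' (ident b), hmarg' b])
  have h_shift := sum_mul_sub_mul_sum_abs_sub_le univ π U (fun b => (D b : ℝ)) hD_abs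
  refine ⟨by linarith, fun μ hμ => ?_⟩
  have h_μ : μ * lam ≤ ΔT / N := by rw [hlam, ← mul_div_assoc]; gcongr
  linarith

/-- **Lower bound under an arbitrary ballot law.**
In the ballot-discrepancy setting, for any probability distribution `π` on the
ballots and `U` the uniform distribution,
`∑_b π(b) D(b) ≥ Δ_T/N − 2κ − (λ−1)₊ − 4 d_TV(π,U)`;
and if `Δ_T ≥ μ·M` then
`∑_b π(b) D(b) ≥ μλ − 2κ − (λ−1)₊ − 4 d_TV(π,U)`. -/
theorem general_ballot_law_lower_bound
    {B I : Type*} [Fintype B] [Nonempty B] [DecidableEq I]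
    (ident : B → I)
    (marg : B → ℤ) (hmarg : ∀ b, marg b = -1 ∨ marg b = 0 ∨ marg b = 1)
    (T : Finset I)
    (v : I → ℤ) (hv : ∀ ι ∈ T, v ι = -1 ∨ v ι = 0 ∨ v ι = 1)
    (D : B → ℤ)
    (hD : ∀ b, D b = if ident b ∈ T then v (ident b) - marg b else 1 - marg b)
    (N M : ℕ) (hN : N = Fintype.card B) (hM : M = T.card)
    (lam κ : ℝ)
    (hlam : lam = (M : ℝ) / (N : ℝ))
    (hκ : κ = ((N : ℝ) - ((Finset.univ.image ident).card : ℝ)) / (N : ℝ))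
    (ΔT : ℤ) (hΔT : ΔT = ∑ ι ∈ T, v ι - ∑ b, marg b)
    (π : B → ℝ) (hπ0 : ∀ b, 0 ≤ π b) (hπ1 : ∑ b, π b = 1)
    (U : B → ℝ) (hU : ∀ b, U b = 1 / (N : ℝ)) :
    (∑ b, π b * (D b : ℝ) ≥
        (ΔT : ℝ) / (N : ℝ) - 2 * κ - max (lam - 1) 0 -
          4 * ((1 / 2) * ∑ b, |π b - U b|)) ∧
      (∀ μ : ℝ, (ΔT : ℝ) ≥ μ * (M : ℝ) →
        ∑ b, π b * (D b : ℝ) ≥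
          μ * lam - 2 * κ - max (lam - 1) 0 -
            4 * ((1 / 2) * ∑ b, |π b - U b|)) :=
  general_ballot_law_lower_bound_general ident marg hmarg T v hv D hD N M hN hM lam κ hlam hκ ΔT hΔT
    π U hU
end

section
/- In the ballot-discrepancy setting, let π be a probability distribution on B and U the uniform distribution on B, and suppose d_TV(π, U) ≤ γ, 1/(1+ε) ≤ λ ≤ 1+τ for some γ, ε, τ ≥ 0, and Δ_T ≥ μ·M for some real μ with 0 ≤ μ ≤ 1. Then ∑_{b∈B} π(b)·D(b) ≥ min{ μ/(1+ε), μ·(1+τ) − τ } − 2κ − 4γ. -/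
open Finset

/-- **Comparison bound from total variation and size control.**
In the ballot-discrepancy setting, if `d_TV(π,U) ≤ γ`,
`1/(1+ε) ≤ λ ≤ 1+τ` and `Δ_T ≥ μ·M` with `0 ≤ μ ≤ 1`, then
`∑_b π(b) D(b) ≥ min { μ/(1+ε), μ(1+τ) − τ } − 2κ − 4γ`. -/
theorem comparison_bound_from_tv_and_size
    {B I : Type*} [Fintype B] [Nonempty B] [DecidableEq I]
    (ident : B → I)
    (marg : B → ℤ) (hmarg : ∀ b, marg b = -1 ∨ marg b = 0 ∨ marg b = 1)
    (T : Finset I)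
    (v : I → ℤ) (hv : ∀ ι ∈ T, v ι = -1 ∨ v ι = 0 ∨ v ι = 1)
    (D : B → ℤ)
    (hD : ∀ b, D b = if ident b ∈ T then v (ident b) - marg b else 1 - marg b)
    (N M : ℕ) (hN : N = Fintype.card B) (hM : M = T.card)
    (lam κ : ℝ)
    (hlam : lam = (M : ℝ) / (N : ℝ))
    (hκ : κ = ((N : ℝ) - ((Finset.univ.image ident).card : ℝ)) / (N : ℝ))
    (ΔT : ℤ) (hΔT : ΔT = ∑ ι ∈ T, v ι - ∑ b, marg b)
    (π : B → ℝ) (hπ0 : ∀ b, 0 ≤ π b) (hπ1 : ∑ b, π b = 1)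
    (U : B → ℝ) (hU : ∀ b, U b = 1 / (N : ℝ))
    (γ ε τ μ : ℝ) (hγ : 0 ≤ γ) (hε : 0 ≤ ε) (hτ : 0 ≤ τ)
    (htv : (1 / 2) * ∑ b, |π b - U b| ≤ γ)
    (hlam1 : 1 / (1 + ε) ≤ lam) (hlam2 : lam ≤ 1 + τ)
    (hμ0 : 0 ≤ μ) (hμ1 : μ ≤ 1) (hΔμ : (ΔT : ℝ) ≥ μ * (M : ℝ)) :
    ∑ b, π b * (D b : ℝ) ≥
      min (μ / (1 + ε)) (μ * (1 + τ) - τ) - 2 * κ - 4 * γ := by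
  classical
  set A : Finset I := Finset.univ.image ident with hA
  set f : I → ℤ := fun ι => if ι ∈ T then v ι else 1 with hf
  have hNpos : 0 < N := by
    rw [hN]; exact Fintype.card_pos
  have hNR : 0 < (N : ℝ) := by exact_mod_cast hNpos
  -- Integer part: ∑ D ≥ ΔT + 2|A| - N - M
  have hDsplit : ∑ b, D b = ∑ b, f (ident b) - ∑ b, marg b := by
    rw [← Finset.sum_sub_distrib]
    refine Finset.sum_congr rfl fun b _ => ?_
    rw [hD b]; simp only [hf]; split_ifs <;> ring
  have hcomp : ∑ b, f (ident b)
      = ∑ ι ∈ A, ((Finset.filter (fun a => ident a = ι) Finset.univ).card) • f ι :=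
    Finset.sum_comp f ident
  have hcards : (N : ℤ) = ∑ ι ∈ A, ((Finset.filter (fun a => ident a = ι) Finset.univ).card : ℤ) := by
    have := Finset.card_eq_sum_card_image ident (Finset.univ : Finset B)
    rw [hN, Fintype.card]
    exact_mod_cast this
  have hfge : ∀ ι ∈ A, -1 ≤ f ι := by
    intro ι hι
    simp only [hf]
    split_ifs with h
    · rcases hv ι h with h1 | h1 | h1 <;> omega
    · omega
  have hstep1 : ∑ ι ∈ A, (f ι - (((Finset.filter (fun a => ident a = ι) Finset.univ).card : ℤ) - 1))
      ≤ ∑ b, f (ident b) := by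
    rw [hcomp]
    refine Finset.sum_le_sum fun ι hι => ?_
    have hc1 : 1 ≤ (Finset.filter (fun a => ident a = ι) Finset.univ).card := by
      rw [Finset.mem_image] at hι
      obtain ⟨b, _, hb⟩ := hι
      refine Finset.card_pos.mpr ⟨b, ?_⟩
      simp [hb]
    have hfι := hfge ι hι
    have hc1' : (1 : ℤ) ≤ ((Finset.filter (fun a => ident a = ι) Finset.univ).card : ℤ) := by
      exact_mod_cast hc1
    rw [nsmul_eq_mul]
    nlinarith
  have hstep1' : ∑ ι ∈ A, f ι - ((N : ℤ) - A.card) ≤ ∑ b, f (ident b) := by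
    calc ∑ ι ∈ A, f ι - ((N : ℤ) - A.card)
        = ∑ ι ∈ A, (f ι - (((Finset.filter (fun a => ident a = ι) Finset.univ).card : ℤ) - 1)) := by
          rw [Finset.sum_sub_distrib, Finset.sum_sub_distrib, hcards]
          simp [Finset.sum_const]
      _ ≤ _ := hstep1
  have hAsum : ∑ ι ∈ A, f ι = ∑ ι ∈ A ∩ T, v ι + ((A \ T).card : ℤ) := by
    simp only [hf]
    rw [Finset.sum_ite, Finset.filter_mem_eq_inter, ← Finset.sdiff_eq_filter]
    simp
  have hTsum : ∑ ι ∈ T, v ι = ∑ ι ∈ T \ A, v ι + ∑ ι ∈ A ∩ T, v ι := by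
    have h1 : A ∩ T ⊆ T := Finset.inter_subset_right
    rw [← Finset.sum_sdiff h1]
    congr 1
    · congr 1
      rw [Finset.inter_comm, Finset.sdiff_inter_self_left]
  have hvle : ∑ ι ∈ T \ A, v ι ≤ ((T \ A).card : ℤ) := by
    have := Finset.sum_le_card_nsmul (T \ A) v 1 (fun ι hι => by
      rcases hv ι (Finset.mem_sdiff.mp hι).1 with h1 | h1 | h1 <;> omega)
    simpa using this
  have hcardAT : ((A \ T).card : ℤ) + ((A ∩ T).card : ℤ) = (A.card : ℤ) := by
    exact_mod_cast Finset.card_sdiff_add_card_inter A T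
  have hcardTA : ((T \ A).card : ℤ) + ((A ∩ T).card : ℤ) = (T.card : ℤ) := by
    have := Finset.card_sdiff_add_card_inter T A
    rw [Finset.inter_comm] at this
    exact_mod_cast this
  have hkey : ΔT + 2 * (A.card : ℤ) - N - M ≤ ∑ b, D b := by
    rw [hDsplit, hΔT, hM]
    have : ∑ ι ∈ A, f ι - ∑ ι ∈ T, v ι ≥ (A.card : ℤ) - (T.card : ℤ) := by
      rw [hAsum, hTsum]; linarith
    linarith [hstep1']
  -- Real part
  have hDabs : ∀ b, |(D b : ℝ)| ≤ 2 := by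
    intro b
    have : |D b| ≤ 2 := by
      rw [hD b]
      split_ifs with h
      · rcases hv _ h with h1 | h1 | h1 <;> rcases hmarg b with h2 | h2 | h2 <;>
          rw [h1, h2] <;> norm_num
      · rcases hmarg b with h2 | h2 | h2 <;> rw [h2] <;> norm_num
    calc |(D b : ℝ)| = ((|D b| : ℤ) : ℝ) := by push_cast; rfl
      _ ≤ 2 := by exact_mod_cast this
  have htv2 : ∑ b, π b * (D b : ℝ) ≥ ∑ b, U b * (D b : ℝ) - 4 * γ := by
    have hdiff : ∑ b, π b * (D b : ℝ) - ∑ b, U b * (D b : ℝ)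
        = ∑ b, (π b - U b) * (D b : ℝ) := by
      rw [← Finset.sum_sub_distrib]
      exact Finset.sum_congr rfl fun b _ => by ring
    have habs : |∑ b, (π b - U b) * (D b : ℝ)| ≤ 4 * γ := by
      calc |∑ b, (π b - U b) * (D b : ℝ)| ≤ ∑ b, |(π b - U b) * (D b : ℝ)| :=
            Finset.abs_sum_le_sum_abs _ _
        _ ≤ ∑ b, 2 * |π b - U b| := by
            refine Finset.sum_le_sum fun b _ => ?_
            rw [abs_mul]
            have := hDabs b
            have := abs_nonneg (π b - U b)
            nlinarith
        _ = 2 * ∑ b, |π b - U b| := by rw [Finset.mul_sum]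
        _ ≤ 4 * γ := by linarith
    have := neg_abs_le (∑ b, (π b - U b) * (D b : ℝ))
    linarith [hdiff ▸ this]
  have hUsum : ∑ b, U b * (D b : ℝ) = (1 / (N : ℝ)) * ∑ b, (D b : ℝ) := by
    simp only [hU]
    rw [Finset.mul_sum]
  -- cast integer bound
  have hSR : ((ΔT : ℝ) + 2 * (A.card : ℝ) - N - M) ≤ ∑ b, (D b : ℝ) := by
    have := hkey
    have h2 : ((∑ b, D b : ℤ) : ℝ) = ∑ b, (D b : ℝ) := by push_cast; rfl
    rw [← h2]
    exact_mod_cast this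
  -- final arithmetic
  have hκN : κ * N = (N : ℝ) - (A.card : ℝ) := by
    rw [hκ]; field_simp
  have hlamN : lam * N = (M : ℝ) := by
    rw [hlam]; field_simp
  have hmin : min (μ / (1 + ε)) (μ * (1 + τ) - τ) ≤ μ * (1 + τ) - τ := min_le_right _ _
  have hmain : (1 / (N : ℝ)) * ∑ b, (D b : ℝ) ≥ μ * (1 + τ) - τ - 2 * κ := by
    rw [ge_iff_le, ← sub_nonneg]
    have hS : (N : ℝ) * (μ * (1 + τ) - τ - 2 * κ) ≤ ∑ b, (D b : ℝ) := by
      have h1 : (1 - μ) * ((1 + τ) - lam) ≥ 0 := by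
        apply mul_nonneg <;> linarith
      nlinarith [hΔμ, hSR, hκN, hlamN]
    have : (1 / (N : ℝ)) * ((N : ℝ) * (μ * (1 + τ) - τ - 2 * κ))
        ≤ (1 / (N : ℝ)) * ∑ b, (D b : ℝ) := by
      apply mul_le_mul_of_nonneg_left hS
      positivity
    rw [← mul_assoc, one_div, inv_mul_cancel₀ (ne_of_gt hNR), one_mul] at this
    rw [one_div]
    linarith
  calc ∑ b, π b * (D b : ℝ) ≥ (1 / (N : ℝ)) * ∑ b, (D b : ℝ) - 4 * γ := by
        rw [← hUsum]; exact htv2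
    _ ≥ (μ * (1 + τ) - τ - 2 * κ) - 4 * γ := by linarith
    _ ≥ min (μ / (1 + ε)) (μ * (1 + τ) - τ) - 2 * κ - 4 * γ := by linarith
end

section
/- Let s ≥ 1 be an integer, r ∈ [0,1], and let I_1,…,I_s be independent Bernoulli random variables with Pr[I_j = 1] ≥ r for each j. Then Pr[∑_{j=1}^s I_j ≤ 1] ≤ (1 − r²)^{s−1}. -/
/-!
Add the variables one at a time. If `S` is a partial sum and `X` a further summand independent of
it, with `q = P(X = 0) ≤ 1 - r`, then `P(S + X = 0) = P(S = 0) q` and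
`P(S + X ≤ 1) ≤ P(S = 0) + (P(S ≤ 1) - P(S = 0)) q ≤ P(S = 0) r + P(S ≤ 1) (1 - r)`.
Carrying the bounds `P(S = 0) ≤ (1 - r)^n` and `P(S ≤ 1) ≤ (1 - r²)^(n-1)` along the induction,
the step reduces to `(1 - r)^n r + (1 - r²)^(n-1) (1 - r) ≤ (1 - r²)^n`, which holds because
`(1 - r)^(n-1) ≤ (1 - r²)^(n-1)`.
-/

open MeasureTheory ProbabilityTheory Finset

lemma one_sub_pow_mul_add_le_one_sub_sq_pow {r : ℝ} (hr0 : 0 ≤ r) (hr1 : r ≤ 1) (n : ℕ) :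
    (1 - r) ^ n * r + (1 - r ^ 2) ^ (n - 1) * (1 - r) ≤ (1 - r ^ 2) ^ n := by
  rcases n with _ | m
  · norm_num
  · have hpow : (1 - r) ^ m ≤ (1 - r ^ 2) ^ m := pow_le_pow_left₀ (by linarith) (by nlinarith) m
    calc (1 - r) ^ (m + 1) * r + (1 - r ^ 2) ^ (m + 1 - 1) * (1 - r)
        = (1 - r) ^ m * ((1 - r) * r) + (1 - r ^ 2) ^ m * (1 - r) := by
          rw [Nat.add_sub_cancel]; ring
      _ ≤ (1 - r ^ 2) ^ m * ((1 - r) * r) + (1 - r ^ 2) ^ m * (1 - r) := by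
          gcongr
      _ = (1 - r ^ 2) ^ (m + 1) := by ring

namespace ProbabilityTheory

variable {Ω : Type*} [MeasurableSpace Ω] {μ : Measure Ω}

lemma measureReal_eq_zero_le_one_sub [IsProbabilityMeasure μ] {X : Ω → ℕ} (hX : Measurable X) :
    μ.real {ω | X ω = 0} ≤ 1 - μ.real {ω | X ω = 1} := by
  calc μ.real {ω | X ω = 0} ≤ μ.real (X ⁻¹' {1})ᶜ :=
        measureReal_mono fun ω (h : X ω = 0) (h1 : X ω = 1) => by omega
    _ = 1 - μ.real (X ⁻¹' {1}) := by
        rw [measureReal_compl (hX (measurableSet_singleton 1)), probReal_univ]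

lemma IndepFun.measureReal_add_eq_zero {S X : Ω → ℕ} (hSX : IndepFun S X μ) :
    μ.real {ω | S ω + X ω = 0} = μ.real {ω | S ω = 0} * μ.real {ω | X ω = 0} := by
  have hset : {ω | S ω + X ω = 0} = S ⁻¹' {0} ∩ X ⁻¹' {0} := by ext; simp
  rw [hset, measureReal_def, hSX.measure_inter_preimage_eq_mul _ _ (measurableSet_singleton 0)
    (measurableSet_singleton 0), ENNReal.toReal_mul]
  rfl

lemma IndepFun.measureReal_add_le_one_le [IsFiniteMeasure μ] {S X : Ω → ℕ} (hS : Measurable S)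
    (hSX : IndepFun S X μ) :
    μ.real {ω | S ω + X ω ≤ 1} ≤
      μ.real {ω | S ω = 0} + (μ.real {ω | S ω ≤ 1} - μ.real {ω | S ω = 0}) *
        μ.real {ω | X ω = 0} := by
  have hcover : {ω | S ω + X ω ≤ 1} ⊆ {ω | S ω = 0} ∪ (S ⁻¹' {1} ∩ X ⁻¹' {0}) := by
    intro ω; simp only [Set.mem_ofPred_eq, Set.mem_union, Set.mem_inter_iff, Set.mem_preimage,
      Set.mem_singleton_iff]; omega
  have hprod : μ.real (S ⁻¹' {1} ∩ X ⁻¹' {0}) = μ.real {ω | S ω = 1} * μ.real {ω | X ω = 0} := by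
    rw [measureReal_def, hSX.measure_inter_preimage_eq_mul _ _ (measurableSet_singleton 1)
      (measurableSet_singleton 0), ENNReal.toReal_mul]
    rfl
  have hsplit : μ.real {ω | S ω = 0} + μ.real {ω | S ω = 1} ≤ μ.real {ω | S ω ≤ 1} := by
    have hdisj : Disjoint {ω | S ω = 0} (S ⁻¹' {1}) :=
      Set.disjoint_left.2 fun ω (h0 : S ω = 0) (h1 : S ω = 1) => by omega
    calc μ.real {ω | S ω = 0} + μ.real (S ⁻¹' {1})
        = μ.real ({ω | S ω = 0} ∪ S ⁻¹' {1}) :=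
          (measureReal_union hdisj (hS (measurableSet_singleton 1))).symm
      _ ≤ μ.real {ω | S ω ≤ 1} :=
          measureReal_mono fun ω h => by rcases h with (h | h) <;> simp_all
  calc μ.real {ω | S ω + X ω ≤ 1}
      ≤ μ.real {ω | S ω = 0} + μ.real (S ⁻¹' {1} ∩ X ⁻¹' {0}) :=
        (measureReal_mono hcover).trans (measureReal_union_le _ _)
    _ ≤ _ := by
        rw [hprod]; gcongr; linarith

lemma iIndepFun.measureReal_sum_eq_zero_le_and_sum_le_one_le [IsProbabilityMeasure μ]
    {ι : Type*} [DecidableEq ι] {I : ι → Ω → ℕ} (hmeas : ∀ j, Measurable (I j))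
    (hindep : iIndepFun I μ) {r : ℝ} (hr0 : 0 ≤ r) (hr1 : r ≤ 1)
    (hlb : ∀ j, r ≤ μ.real {ω | I j ω = 1}) (J : Finset ι) :
    μ.real {ω | ∑ j ∈ J, I j ω = 0} ≤ (1 - r) ^ #J ∧
      μ.real {ω | ∑ j ∈ J, I j ω ≤ 1} ≤ (1 - r ^ 2) ^ (#J - 1) := by
  induction J using Finset.induction_on with
  | empty => simp [probReal_univ]
  | insert a J ha ih =>
    obtain ⟨hzero, hle⟩ := ih
    set S : Ω → ℕ := fun ω => ∑ j ∈ J, I j ω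
    have hS : Measurable S := measurable_sum J fun j _ => hmeas j
    have hSX : IndepFun S (I a) μ := by
      simpa [S, sum_fn] using hindep.indepFun_finsetSum_of_notMem hmeas ha
    have hq : μ.real {ω | I a ω = 0} ≤ 1 - r :=
      (measureReal_eq_zero_le_one_sub (hmeas a)).trans (by linarith [hlb a])
    have hmono : μ.real {ω | S ω = 0} ≤ μ.real {ω | S ω ≤ 1} :=
      measureReal_mono fun ω (h : S ω = 0) => by simp [h]
    simp only [sum_insert ha, card_insert_of_notMem ha, add_comm (I a _)]
    constructor
    · rw [hSX.measureReal_add_eq_zero, pow_succ]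
      exact mul_le_mul hzero hq measureReal_nonneg (by positivity)
    · calc _ ≤ _ := hSX.measureReal_add_le_one_le hS
        _ ≤ μ.real {ω | S ω = 0} + (μ.real {ω | S ω ≤ 1} - μ.real {ω | S ω = 0}) * (1 - r) := by
            gcongr
        _ = μ.real {ω | S ω = 0} * r + μ.real {ω | S ω ≤ 1} * (1 - r) := by ring
        _ ≤ (1 - r) ^ #J * r + (1 - r ^ 2) ^ (#J - 1) * (1 - r) := by
            gcongr
        _ ≤ (1 - r ^ 2) ^ (#J + 1 - 1) :=
            one_sub_pow_mul_add_le_one_sub_sq_pow hr0 hr1 #J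

end ProbabilityTheory

theorem bernoulli_sum_le_one_bound_general
    {Ω : Type*} [MeasurableSpace Ω] (μ : Measure Ω) [IsProbabilityMeasure μ]
    (s : ℕ) (r : ℝ) (hr0 : 0 ≤ r) (hr1 : r ≤ 1)
    (I : Fin s → Ω → ℕ) (hmeas : ∀ j, Measurable (I j))
    (hindep : iIndepFun I μ)
    (hlb : ∀ j, ENNReal.ofReal r ≤ μ {ω | I j ω = 1}) :
    μ {ω | ∑ j, I j ω ≤ 1} ≤ ENNReal.ofReal ((1 - r ^ 2) ^ (s - 1)) := by
  have hlb_real : ∀ j, r ≤ μ.real {ω | I j ω = 1} := fun j =>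
    (ENNReal.ofReal_le_iff_le_toReal (measure_ne_top μ _)).1 (hlb j)
  have h := (hindep.measureReal_sum_eq_zero_le_and_sum_le_one_le hmeas hr0 hr1 hlb_real
    univ).2
  rw [card_univ, Fintype.card_fin] at h
  rw [← ofReal_measureReal]
  exact ENNReal.ofReal_le_ofReal h

/-- **Binomial domination for independent Bernoulli indicators.**
If `I 1, …, I s` are independent `{0,1}`-valued random variables with
`Pr[I j = 1] ≥ r` for each `j`, where `s ≥ 1` and `r ∈ [0,1]`, then
`Pr[∑ j, I j ≤ 1] ≤ (1 − r²)^{s−1}`. -/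
theorem bernoulli_sum_le_one_bound
    {Ω : Type*} [MeasurableSpace Ω] (μ : Measure Ω) [IsProbabilityMeasure μ]
    (s : ℕ) (hs : 1 ≤ s) (r : ℝ) (hr0 : 0 ≤ r) (hr1 : r ≤ 1)
    (I : Fin s → Ω → ℕ) (hmeas : ∀ j, Measurable (I j))
    (h01 : ∀ j ω, I j ω = 0 ∨ I j ω = 1)
    (hindep : iIndepFun I μ)
    (hlb : ∀ j, ENNReal.ofReal r ≤ μ {ω | I j ω = 1}) :
    μ {ω | ∑ j, I j ω ≤ 1} ≤ ENNReal.ofReal ((1 - r ^ 2) ^ (s - 1)) :=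
  bernoulli_sum_le_one_bound_general μ s r hr0 hr1 I hmeas hindep hlb
end

section
/- Let A be a finite set, let f : A → B be a function into a set B, let ℓ̃ := |A| − |f(A)| where f(A) denotes the image of A under f, let r ∈ [0,1], and let (I_x)_{x∈A} be independent Bernoulli random variables with Pr[I_x = 1] ≥ r for each x ∈ A. Then the probability that every fiber of f contains at most one x with I_x = 1 (that is, Pr[ for all b ∈ B, |{x ∈ f⁻¹(b) : I_x = 1}| ≤ 1 ]) is at most (1 − r²)^{ℓ̃}, and hence at most exp(−ℓ̃·r²). -/
/-!
Pick `x` whose fiber contains some other element. If `I x ≠ 1`, the event persists on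
`S \ {x}`, whose excess is one less. If `I x = 1`, all other elements of the fiber of `x` must be
inactive, each with probability at most `1 - r`, independently of the event on the remaining
fibers. With `p = Pr[I x = 1] ≥ r` and `q = 1 - r²`, induction gives at most
`(1 - p) q^(ℓ-1) + p (1 - r) q^(ℓ-1) ≤ ((1 - r) + r (1 - r)) q^(ℓ-1) = q^ℓ`.
Independence is used only through the fact that events determined by the variables on disjoint
index sets are independent.
-/

open MeasureTheory ProbabilityTheory Finset

namespace ProbabilityTheory

section Determined

variable {Ω A β : Type*}

def IsDeterminedBy (I : A → Ω → β) (T : Finset A) (s : Set Ω) : Prop :=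
  ∀ ω ω', (∀ a ∈ T, I a ω = I a ω') → ω ∈ s → ω' ∈ s

namespace IsDeterminedBy

variable {I : A → Ω → β} {T T' : Finset A} {s t : Set Ω}

lemma mono (hs : IsDeterminedBy I T s) (hTT' : T ⊆ T') : IsDeterminedBy I T' s :=
  fun ω ω' h => hs ω ω' fun a ha => h a (hTT' ha)

lemma inter (hs : IsDeterminedBy I T s) (ht : IsDeterminedBy I T t) :
    IsDeterminedBy I T (s ∩ t) :=
  fun ω ω' h hω => ⟨hs ω ω' h hω.1, ht ω ω' h hω.2⟩

lemma biInter {F : Finset A} {s : A → Set Ω} (hs : ∀ a ∈ F, IsDeterminedBy I T (s a)) :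
    IsDeterminedBy I T (⋂ a ∈ F, s a) := by
  intro ω ω' h hω
  simp only [Set.mem_iInter] at hω ⊢
  exact fun a ha => hs a ha ω ω' h (hω a ha)

lemma setOf_apply (a : A) (P : β → Prop) : IsDeterminedBy I {a} {ω | P (I a ω)} := by
  intro ω ω' h hω
  simpa only [Set.mem_ofPred_eq, h a (mem_singleton_self a)] using hω

lemma eq_preimage_image (hs : IsDeterminedBy I T s) :
    s = (fun ω (a : T) => I a ω) ⁻¹' ((fun ω (a : T) => I a ω) '' s) := by
  refine (Set.subset_preimage_image _ _).antisymm ?_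
  rintro ω' ⟨ω, hω, hEq⟩
  exact hs ω ω' (fun a ha => congrFun hEq ⟨a, ha⟩) hω

end IsDeterminedBy

variable [MeasurableSpace Ω] [MeasurableSpace β] [Countable β] [MeasurableSingletonClass β]
  {μ : Measure Ω} {I : A → Ω → β}

lemma measure_inter_eq_mul_of_isDeterminedBy (hindep : iIndepFun I μ)
    (hmeas : ∀ a, Measurable (I a)) {T U : Finset A} (hTU : Disjoint T U) {s t : Set Ω}
    (hs : IsDeterminedBy I T s) (ht : IsDeterminedBy I U t) :
    μ (s ∩ t) = μ s * μ t := by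
  rw [hs.eq_preimage_image, ht.eq_preimage_image]
  exact (hindep.indepFun_finset T U hTU hmeas).measure_inter_preimage_eq_mul _ _
    (Set.to_countable _).measurableSet (Set.to_countable _).measurableSet

lemma measure_biInter_inter_eq_prod_mul [DecidableEq A] (hindep : iIndepFun I μ)
    (hmeas : ∀ a, Measurable (I a)) {s : A → Set Ω} (hs : ∀ a, IsDeterminedBy I {a} (s a))
    {U : Finset A} {t : Set Ω} (ht : IsDeterminedBy I U t) :
    ∀ F : Finset A, Disjoint F U → μ ((⋂ a ∈ F, s a) ∩ t) = (∏ a ∈ F, μ (s a)) * μ t := by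
  intro F
  induction F using Finset.induction with
  | empty => simp
  | @insert a F ha ih =>
    intro hFU
    rw [disjoint_insert_left] at hFU
    have hrest : IsDeterminedBy I (F ∪ U) ((⋂ b ∈ F, s b) ∩ t) :=
      (IsDeterminedBy.biInter fun b hb =>
        (hs b).mono (singleton_subset_iff.2 (mem_union_left U hb))).inter
        (ht.mono subset_union_right)
    rw [set_biInter_insert, Set.inter_assoc, prod_insert ha, mul_assoc,
      measure_inter_eq_mul_of_isDeterminedBy hindep hmeas _ (hs a) hrest, ih hFU.2]
    simp [ha, hFU.1]

end Determined

section Collision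

variable {Ω A B : Type*} [DecidableEq B] (f : A → B) (I : A → Ω → ℕ)

def collisionFree (S : Finset A) : Set Ω :=
  {ω | ∀ b, (S.filter fun x => f x = b ∧ I x ω = 1).card ≤ 1}

def fiberExcess (S : Finset A) : ℕ := S.card - (S.image f).card

variable {f I}

lemma collisionFree_anti {S T : Finset A} (hTS : T ⊆ S) :
    collisionFree f I S ⊆ collisionFree f I T :=
  fun _ hω b => (card_le_card (filter_subset_filter _ hTS)).trans (hω b)

lemma isDeterminedBy_collisionFree (S : Finset A) :
    IsDeterminedBy I S (collisionFree f I S) := by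
  intro ω ω' h hω b
  rw [filter_congr fun x hx => by rw [← h x hx]]
  exact hω b

lemma ne_one_of_mem_collisionFree {S : Finset A} {ω : Ω} (hω : ω ∈ collisionFree f I S)
    {x y : A} (hx : x ∈ S) (hy : y ∈ S) (hxy : x ≠ y) (hf : f x = f y) (hIx : I x ω = 1) :
    I y ω ≠ 1 := by
  intro hIy
  have : 1 < (S.filter fun z => f z = f x ∧ I z ω = 1).card :=
    one_lt_card.2 ⟨x, by simp [hx, hIx], y, by simp [hy, hf, hIy], hxy⟩
  exact (hω (f x)).not_gt this

lemma collisionFree_subset_union [DecidableEq A] {S : Finset A} {x : A} (hx : x ∈ S) :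
    collisionFree f I S ⊆
      ({ω | I x ω ≠ 1} ∩ collisionFree f I (S.erase x)) ∪
      ({ω | I x ω = 1} ∩ ((⋂ y ∈ (S.filter (f · = f x)).erase x, {ω | I y ω ≠ 1}) ∩
        collisionFree f I (S.filter (f · ≠ f x)))) := by
  intro ω hω
  by_cases hIx : I x ω = 1
  · refine Or.inr ⟨hIx, ?_, collisionFree_anti (filter_subset _ S) hω⟩
    simp only [Set.mem_iInter, mem_erase, mem_filter]
    rintro y ⟨hyx, hy, hf⟩
    exact ne_one_of_mem_collisionFree hω hx hy (Ne.symm hyx) hf.symm hIx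
  · exact Or.inl ⟨hIx, collisionFree_anti (erase_subset x S) hω⟩

lemma fiberExcess_eq_zero_of_injOn {S : Finset A} (hinj : Set.InjOn f S) :
    fiberExcess f S = 0 := by
  simp [fiberExcess, card_image_of_injOn hinj]

lemma fiberExcess_eq_of_mem {S : Finset A} {x : A} (hx : x ∈ S) :
    fiberExcess f S =
      (S.filter (f · = f x)).card - 1 + fiberExcess f (S.filter (f · ≠ f x)) := by
  have hcard : (S.filter (f · = f x)).card + (S.filter (f · ≠ f x)).card = S.card :=
    S.card_filter_add_card_filter_not _
  have himage : S.image f = insert (f x) ((S.filter (f · ≠ f x)).image f) := by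
    ext b
    simp only [mem_image, mem_insert, mem_filter]
    constructor
    · rintro ⟨z, hz, rfl⟩
      by_cases h : f z = f x
      · exact Or.inl h
      · exact Or.inr ⟨z, ⟨hz, h⟩, rfl⟩
    · rintro (rfl | ⟨z, ⟨hz, -⟩, rfl⟩)
      exacts [⟨x, hx, rfl⟩, ⟨z, hz, rfl⟩]
  have hfx : f x ∉ (S.filter (f · ≠ f x)).image f := by simp
  have hpos : 0 < (S.filter (f · = f x)).card := card_pos.2 ⟨x, by simp [hx]⟩
  have hle := card_image_le (s := S.filter (f · ≠ f x)) (f := f)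
  simp only [fiberExcess, himage, card_insert_of_notMem hfx]
  omega

end Collision

section Bound

open ENNReal

variable {Ω A B : Type*} [MeasurableSpace Ω] [DecidableEq B] {μ : Measure Ω}
  [IsProbabilityMeasure μ] {f : A → B} {I : A → Ω → ℕ} {r : ℝ}

lemma one_sub_mul_add_mul_le (hr0 : 0 ≤ r) {p a b : ℝ≥0∞} (hrp : ENNReal.ofReal r ≤ p)
    (hp : p ≤ 1) (hb : b ≤ ENNReal.ofReal (1 - r) * a) :
    (1 - p) * a + p * b ≤ ENNReal.ofReal (1 - r ^ 2) * a := by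
  set ρ := ENNReal.ofReal r
  have hr1 : r ≤ 1 := ENNReal.ofReal_le_one.1 (hrp.trans hp)
  have hρ : 1 - ρ = ENNReal.ofReal (1 - r) := by rw [ENNReal.ofReal_sub 1 hr0, ofReal_one]
  have hq : ENNReal.ofReal (1 - r) + ρ * ENNReal.ofReal (1 - r) = ENNReal.ofReal (1 - r ^ 2) := by
    rw [← ENNReal.ofReal_mul hr0, ← ENNReal.ofReal_add (by linarith) (by nlinarith)]
    ring_nf
  have hba : b ≤ a := hb.trans (mul_le_of_le_one_left' (ofReal_le_one.2 (by linarith)))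
  -- since `b ≤ a`, the left side only grows when `p` is lowered to `ρ`
  calc (1 - p) * a + p * b = (1 - p) * a + (p - ρ) * b + ρ * b := by
        rw [add_assoc, ← add_mul, tsub_add_cancel_of_le hrp]
    _ ≤ (1 - p) * a + (p - ρ) * a + ρ * (ENNReal.ofReal (1 - r) * a) := by gcongr
    _ = ((1 - p) + (p - ρ)) * a + ρ * (ENNReal.ofReal (1 - r) * a) := by rw [add_mul]
    _ = ENNReal.ofReal (1 - r ^ 2) * a := by
        rw [tsub_add_tsub_cancel hp hrp, hρ, ← hq]
        ring

lemma measure_setOf_ne_eq_one_sub {β : Type*} [MeasurableSpace β] [MeasurableSingletonClass β]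
    {X : Ω → β} (hX : Measurable X) (c : β) :
    μ {ω | X ω ≠ c} = 1 - μ {ω | X ω = c} :=
  prob_compl_eq_one_sub (hX (measurableSet_singleton c))

lemma measure_collisionFree_le_of_mem [DecidableEq A] (hindep : iIndepFun I μ)
    (hmeas : ∀ x, Measurable (I x)) (hr0 : 0 ≤ r)
    (hlb : ∀ x, ENNReal.ofReal r ≤ μ {ω | I x ω = 1}) {S : Finset A} {x : A} (hx : x ∈ S) :
    μ (collisionFree f I S) ≤
      (1 - μ {ω | I x ω = 1}) * μ (collisionFree f I (S.erase x)) +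
      μ {ω | I x ω = 1} * (ENNReal.ofReal (1 - r) ^ ((S.filter (f · = f x)).erase x).card *
        μ (collisionFree f I (S.filter (f · ≠ f x)))) := by
  set F := (S.filter (f · = f x)).erase x
  set G := S.filter (f · ≠ f x)
  have hFG : Disjoint F G := disjoint_left.2 fun y hy => by simp_all [F, G]
  have hdisj : Disjoint {x} (S.erase x) := by simp
  have hne : ∀ y, IsDeterminedBy I {y} {ω | I y ω ≠ 1} := fun y => .setOf_apply y (· ≠ 1)
  have heq : IsDeterminedBy I {x} {ω | I x ω = 1} := .setOf_apply x (· = 1)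
  have hinactive : μ ({ω | I x ω ≠ 1} ∩ collisionFree f I (S.erase x)) =
      (1 - μ {ω | I x ω = 1}) * μ (collisionFree f I (S.erase x)) := by
    rw [measure_inter_eq_mul_of_isDeterminedBy hindep hmeas hdisj (hne x)
      (isDeterminedBy_collisionFree _), measure_setOf_ne_eq_one_sub (hmeas x)]
  have hactive : μ ({ω | I x ω = 1} ∩ ((⋂ y ∈ F, {ω | I y ω ≠ 1}) ∩ collisionFree f I G)) ≤
      μ {ω | I x ω = 1} * (ENNReal.ofReal (1 - r) ^ F.card * μ (collisionFree f I G)) := by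
    have hFS : F ⊆ S.erase x := erase_subset_erase x (filter_subset _ S)
    have hGS : G ⊆ S.erase x := fun y hy =>
      mem_erase.2 ⟨fun h => (mem_filter.1 hy).2 (h ▸ rfl), (mem_filter.1 hy).1⟩
    have hrest : IsDeterminedBy I (S.erase x)
        ((⋂ y ∈ F, {ω | I y ω ≠ 1}) ∩ collisionFree f I G) :=
      (IsDeterminedBy.biInter fun y hy => (hne y).mono (singleton_subset_iff.2 (hFS hy))).inter
        ((isDeterminedBy_collisionFree G).mono hGS)
    rw [measure_inter_eq_mul_of_isDeterminedBy hindep hmeas hdisj heq hrest,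
      measure_biInter_inter_eq_prod_mul hindep hmeas hne (isDeterminedBy_collisionFree G) F hFG]
    gcongr
    refine prod_le_pow_card _ _ _ fun y _ => ?_
    rw [measure_setOf_ne_eq_one_sub (hmeas y), ENNReal.ofReal_sub 1 hr0, ofReal_one]
    exact tsub_le_tsub_left (hlb y) 1
  calc μ (collisionFree f I S)
      ≤ μ (({ω | I x ω ≠ 1} ∩ collisionFree f I (S.erase x)) ∪
          ({ω | I x ω = 1} ∩ ((⋂ y ∈ F, {ω | I y ω ≠ 1}) ∩ collisionFree f I G))) :=
        measure_mono (collisionFree_subset_union hx)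
    _ ≤ _ := (measure_union_le _ _).trans (add_le_add hinactive.le hactive)

theorem measure_collisionFree_le [DecidableEq A] (hindep : iIndepFun I μ)
    (hmeas : ∀ x, Measurable (I x)) (hr0 : 0 ≤ r)
    (hlb : ∀ x, ENNReal.ofReal r ≤ μ {ω | I x ω = 1}) (S : Finset A) :
    μ (collisionFree f I S) ≤ ENNReal.ofReal (1 - r ^ 2) ^ fiberExcess f S := by
  induction S using Finset.strongInduction with
  | H S ih =>
  by_cases hinj : Set.InjOn f S
  · simp [fiberExcess_eq_zero_of_injOn hinj, prob_le_one]
  obtain ⟨x, hx, y, hy, hfxy, hxy⟩ : ∃ x ∈ S, ∃ y ∈ S, f x = f y ∧ x ≠ y := by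
    simpa [Set.InjOn] using hinj
  set F := (S.filter (f · = f x)).erase x
  set G := S.filter (f · ≠ f x)
  obtain ⟨k, hk⟩ : ∃ k, F.card = k + 1 :=
    Nat.exists_eq_add_one.2 (card_pos.2 ⟨y, by simp [F, hy, hfxy, hxy.symm]⟩)
  have hexcess : fiberExcess f S = k + 1 + fiberExcess f G := by
    rw [fiberExcess_eq_of_mem hx, ← hk, card_erase_of_mem (by simp [hx])]
  have hexcess' : fiberExcess f (S.erase x) = k + fiberExcess f G := by
    have hF : (S.erase x).filter (f · = f y) = F := by rw [← hfxy, filter_erase]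
    have hG : (S.erase x).filter (f · ≠ f y) = G := by
      rw [← hfxy, filter_erase, erase_eq_of_notMem (by simp)]
    rw [fiberExcess_eq_of_mem (mem_erase.2 ⟨hxy.symm, hy⟩), hF, hG, hk, Nat.add_sub_cancel]
  have hGS : G ⊂ S := filter_ssubset.2 ⟨x, hx, by simp⟩
  have hr1 : r ≤ 1 := ENNReal.ofReal_le_one.1 ((hlb x).trans prob_le_one)
  have hqE : ENNReal.ofReal (1 - r) ≤ ENNReal.ofReal (1 - r ^ 2) :=
    ENNReal.ofReal_le_ofReal (by nlinarith)
  calc μ (collisionFree f I S)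
      ≤ (1 - μ {ω | I x ω = 1}) * μ (collisionFree f I (S.erase x)) +
          μ {ω | I x ω = 1} * (ENNReal.ofReal (1 - r) ^ F.card * μ (collisionFree f I G)) :=
        measure_collisionFree_le_of_mem hindep hmeas hr0 hlb hx
    _ ≤ (1 - μ {ω | I x ω = 1}) * ENNReal.ofReal (1 - r ^ 2) ^ (k + fiberExcess f G) +
          μ {ω | I x ω = 1} *
            (ENNReal.ofReal (1 - r) ^ (k + 1) * ENNReal.ofReal (1 - r ^ 2) ^ fiberExcess f G) := by
        rw [← hexcess', ← hk]
        gcongr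
        exacts [ih _ (erase_ssubset hx), ih G hGS]
    _ ≤ ENNReal.ofReal (1 - r ^ 2) * ENNReal.ofReal (1 - r ^ 2) ^ (k + fiberExcess f G) := by
        refine one_sub_mul_add_mul_le hr0 (hlb x) prob_le_one ?_
        rw [pow_succ', pow_add, mul_assoc]
        gcongr
    _ = ENNReal.ofReal (1 - r ^ 2) ^ fiberExcess f S := by
        rw [← pow_succ', hexcess, add_right_comm]

end Bound

end ProbabilityTheory

theorem fiberwise_collision_bound_general
    {Ω : Type*} [MeasurableSpace Ω] (μ : Measure Ω) [IsProbabilityMeasure μ]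
    {A B : Type*} [Fintype A] [DecidableEq A] [DecidableEq B]
    (f : A → B)
    (ℓt : ℕ) (hℓ : ℓt = Fintype.card A - (Finset.univ.image f).card)
    (r : ℝ) (hr0 : 0 ≤ r) (hr1 : r ≤ 1)
    (I : A → Ω → ℕ) (hmeas : ∀ x, Measurable (I x))
    (hindep : iIndepFun I μ)
    (hlb : ∀ x, ENNReal.ofReal r ≤ μ {ω | I x ω = 1}) :
    μ {ω | ∀ b : B,
        (Finset.univ.filter fun x => f x = b ∧ I x ω = 1).card ≤ 1} ≤
        ENNReal.ofReal ((1 - r ^ 2) ^ ℓt) ∧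
      μ {ω | ∀ b : B,
          (Finset.univ.filter fun x => f x = b ∧ I x ω = 1).card ≤ 1} ≤
        ENNReal.ofReal (Real.exp (-(ℓt : ℝ) * r ^ 2)) := by
  have hbound : μ (collisionFree f I univ) ≤ ENNReal.ofReal ((1 - r ^ 2) ^ ℓt) := by
    rw [ENNReal.ofReal_pow (by nlinarith), hℓ, ← card_univ]
    exact measure_collisionFree_le hindep hmeas hr0 hlb univ
  refine ⟨hbound, hbound.trans (ENNReal.ofReal_le_ofReal ?_)⟩
  calc (1 - r ^ 2) ^ ℓt ≤ Real.exp (-r ^ 2) ^ ℓt :=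
        pow_le_pow_left₀ (by nlinarith) (Real.one_sub_le_exp_neg _) ℓt
    _ = Real.exp (-(ℓt : ℝ) * r ^ 2) := by
        rw [← Real.exp_nat_mul]
        ring_nf

/-- **Fiberwise collision bound for independent Bernoulli indicators.**
Let `A` be a finite set, `f : A → B`, and `ℓ̃ := |A| − |f(A)|`.  If
`(I x)_{x ∈ A}` are independent `{0,1}`-valued random variables with
`Pr[I x = 1] ≥ r` for each `x`, `r ∈ [0,1]`, then the probability that every
fiber of `f` contains at most one `x` with `I x = 1` is at most
`(1 − r²)^{ℓ̃}`, and hence at most `exp(−ℓ̃ · r²)`. -/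
theorem fiberwise_collision_bound
    {Ω : Type*} [MeasurableSpace Ω] (μ : Measure Ω) [IsProbabilityMeasure μ]
    {A B : Type*} [Fintype A] [DecidableEq A] [DecidableEq B]
    (f : A → B)
    (ℓt : ℕ) (hℓ : ℓt = Fintype.card A - (Finset.univ.image f).card)
    (r : ℝ) (hr0 : 0 ≤ r) (hr1 : r ≤ 1)
    (I : A → Ω → ℕ) (hmeas : ∀ x, Measurable (I x))
    (h01 : ∀ x ω, I x ω = 0 ∨ I x ω = 1)
    (hindep : iIndepFun I μ)
    (hlb : ∀ x, ENNReal.ofReal r ≤ μ {ω | I x ω = 1}) :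
    μ {ω | ∀ b : B,
        (Finset.univ.filter fun x => f x = b ∧ I x ω = 1).card ≤ 1} ≤
        ENNReal.ofReal ((1 - r ^ 2) ^ ℓt) ∧
      μ {ω | ∀ b : B,
          (Finset.univ.filter fun x => f x = b ∧ I x ω = 1).card ≤ 1} ≤
        ENNReal.ofReal (Real.exp (-(ℓt : ℝ) * r ^ 2)) :=
  fiberwise_collision_bound_general μ f ℓt hℓ r hr0 hr1 I hmeas hindep hlb
end

section
/- Let A be a finite set with |A| = n ≥ 1, let f : A → B be a function into a finite set B with |B| = n − ℓ for an integer ℓ ≥ 0, let c ≥ 0, let Π be a probability distribution on A with 1/(n(1+c)) ≤ Π(x) ≤ (1+c)/n for all x ∈ A, and let 1 ≤ k ≤ n. Let P_seq be the probability distribution on k-tuples (x_1,…,x_k) of pairwise distinct elements of A given by P_seq(x_1,…,x_k) := ∏_{t=1}^{k} Π(x_t)/(1 − ∑_{j=1}^{t−1} Π(x_j)) (sequential weighted sampling without replacement), and let (X_1,…,X_k) be distributed according to P_seq. Let E_k^seq be the event that f(X_i) ≠ f(X_j) for all i ≠ j. Then Pr[E_k^seq] ≤ 2·exp(−ℓ·(1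 − exp(−k/(n(1+c))))²) ≤ 2·exp(−k²·ℓ/(4·n²·(1+c)²)). -/
/-!
Let `U` be the set drawn so far and call an undrawn element *blocked* when its `f`-value already
occurs in `f(U)`. Every element has mass at least `q = 1/(n(1+c))`. The probability that the next
`u` draws add no collision is at most `s_u ^ #blocked · exp(-2qℓ ∑_{v<u} (1 - s_v))`, where
`s_v = decay q v`. In the induction step, the next draw is blocked with probability at least
`q · #blocked`, and a fresh draw `a` blocks the `#f⁻¹(f a) - 1` other elements of its fibre;
since `#A - #B ≥ ℓ`, the fibres of the fresh elements have total excess at least `ℓ - #blocked`,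
and a fibre of size `m` contributes `1 - s^{m-1} ≥ 2(1 - s)(m - 1)/m` on average.
Finally `s_v ≤ 1/(2 - e^{-qv})`; comparing termwise with the telescoping sum of
`(1 - e^{-q(v+1)})² - (1 - e^{-qv})²` gives `2qℓ ∑_{v<k} (1 - s_v) ≥ ℓ(1 - e^{-kq})² - log 2`.
-/

open Finset Real

lemma exp_neg_le_inv_one_add {z : ℝ} (hz : 0 ≤ z) : exp (-z) ≤ (1 + z)⁻¹ := by
  rw [exp_neg]
  exact inv_anti₀ (by positivity) (by linarith [add_one_le_exp z])

lemma half_le_one_sub_exp_neg {p : ℝ} (hp0 : 0 ≤ p) (hp1 : p ≤ 1) :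
    p / 2 ≤ 1 - exp (-p) := by
  have h : (1 + p)⁻¹ ≤ 1 - p / 2 := by
    rw [inv_le_iff_one_le_mul₀ (by positivity)]
    nlinarith
  linarith [exp_neg_le_inv_one_add hp0]

lemma sub_div_le_exp_neg {D z : ℝ} (hD0 : 0 < D) (hD1 : D ≤ 1) (hz : 0 ≤ z) :
    (D - z) / D ≤ exp (-z) := by
  have : z ≤ z / D := le_div_self hz hD0 hD1
  rw [sub_div, div_self hD0.ne']
  linarith [one_sub_le_exp_neg z]

lemma monotoneOn_mul_exp_neg {q : ℝ} (hq0 : 0 ≤ q) (hq2 : q ≤ 1 / 2) :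
    MonotoneOn (fun t => t * exp (-(2 * q * t))) (Set.Icc 0 1) := by
  rintro t₁ ⟨-, -⟩ t₂ ⟨ht₂, ht₂1⟩ h12
  have key : t₁ ≤ t₂ * exp (-(2 * q * (t₂ - t₁))) := by
    have := one_sub_le_exp_neg (2 * q * (t₂ - t₁))
    nlinarith [mul_nonneg (mul_nonneg hq0 (sub_nonneg.2 h12)) (sub_nonneg.2 ht₂1)]
  calc t₁ * exp (-(2 * q * t₁))
      ≤ t₂ * exp (-(2 * q * (t₂ - t₁))) * exp (-(2 * q * t₁)) := by gcongr
    _ = t₂ * exp (-(2 * q * t₂)) := by rw [mul_assoc, ← exp_add]; ring_nf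

lemma two_mul_one_sub_mul_le {t : ℝ} (ht : 1 / 2 ≤ t) (ht1 : t ≤ 1) (j : ℕ) :
    2 * (1 - t) * j ≤ (j + 1) * (1 - t ^ j) := by
  have hgeom : 2 - 2 * (1 / 2) ^ j ≤ ∑ i ∈ range j, t ^ i :=
    calc 2 - 2 * (1 / 2 : ℝ) ^ j = ∑ i ∈ range j, (1 / 2 : ℝ) ^ i := by
          rw [geom_sum_eq (by norm_num)]; ring
      _ ≤ ∑ i ∈ range j, t ^ i := by gcongr
  have hpow : ((j : ℝ) + 1) * (1 / 2) ^ j ≤ 1 := by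
    rw [one_div_pow, mul_one_div, div_le_one (by positivity)]
    exact_mod_cast Nat.lt_two_pow_self
  rw [← mul_neg_geom_sum]
  nlinarith [mul_le_mul_of_nonneg_left hgeom
      (mul_nonneg (sub_nonneg.2 ht1) (by positivity : (0 : ℝ) ≤ j + 1)),
    mul_le_mul_of_nonneg_left hpow (sub_nonneg.2 ht1)]

lemma sq_one_sub_mul_sub_sq_le {q r x : ℝ} (hr : 1 - q ≤ r) (hr1 : r ≤ 1) (hx0 : 0 ≤ x)
    (hx1 : x ≤ 1) :
    (1 - r * x) ^ 2 - (1 - x) ^ 2 ≤ 2 * q * (1 - (2 - x)⁻¹) + q ^ 2 * x ^ 2 := by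
  have hx2 : 0 < 2 - x := by linarith
  have hfrac : x * (1 - x) ≤ 1 - (2 - x)⁻¹ := by
    rw [show 1 - (2 - x)⁻¹ = (1 - x) / (2 - x) by field_simp; ring, le_div_iff₀ hx2]
    nlinarith [sq_nonneg (1 - x), mul_nonneg (sub_nonneg.2 hx1) (sq_nonneg (1 - x))]
  have hq : 0 ≤ q := by linarith
  calc (1 - r * x) ^ 2 - (1 - x) ^ 2
        = 2 * (1 - r) * (x * (1 - x)) + (1 - r) ^ 2 * x ^ 2 := by ring
    _ ≤ 2 * q * (1 - (2 - x)⁻¹) + q ^ 2 * x ^ 2 := by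
      gcongr ?_ * ?_ + ?_ * _
      · linarith
      · exact pow_le_pow_left₀ (by linarith) (by linarith) 2

lemma sq_one_sub_pow_le_sum {q r : ℝ} (hr0 : 0 ≤ r) (hr : 1 - q ≤ r) (hr1 : r ≤ 1) (k : ℕ) :
    (1 - r ^ k) ^ 2 ≤ ∑ u ∈ range k, (2 * q * (1 - (2 - r ^ u)⁻¹) + q ^ 2 * (r ^ 2) ^ u) := by
  have htel := sum_range_sub (fun u => (1 - r ^ u) ^ 2) k
  simp only [pow_zero, sub_self, ne_eq, OfNat.ofNat_ne_zero, not_false_eq_true, zero_pow,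
    sub_zero] at htel
  rw [← htel]
  refine sum_le_sum fun u _ => ?_
  rw [pow_succ' r u, ← pow_right_comm]
  exact sq_one_sub_mul_sub_sq_le hr hr1 (pow_nonneg hr0 u) (pow_le_one₀ hr0 hr1)

noncomputable def decay (q : ℝ) : ℕ → ℝ
  | 0 => 1
  | u + 1 => decay q u * exp (q * (1 - 2 * decay q u))

section Decay

variable {q : ℝ}

lemma decay_succ (u : ℕ) :
    decay q (u + 1) = exp q * (decay q u * exp (-(2 * q * decay q u))) := by
  rw [decay, mul_left_comm, ← exp_add]; ring_nf

lemma decay_mem_Icc (hq0 : 0 ≤ q) (hq2 : q ≤ 1 / 2) (u : ℕ) :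
    decay q u ∈ Set.Icc (1 / 2) 1 := by
  induction u with
  | zero => norm_num [decay]
  | succ u ih =>
    obtain ⟨h1, h2⟩ := ih
    set s := decay q u
    have hexp : 1 + q * (1 - 2 * s) ≤ exp (q * (1 - 2 * s)) := by
      linarith [add_one_le_exp (q * (1 - 2 * s))]
    refine ⟨?_, ?_⟩
    · show 1 / 2 ≤ s * exp (q * (1 - 2 * s))
      have hqs : q * s ≤ 1 / 2 := by nlinarith
      nlinarith [mul_le_mul_of_nonneg_left hexp (by linarith : 0 ≤ s),
        mul_nonneg (by linarith : 0 ≤ 2 * s - 1) (by linarith : 0 ≤ 1 / 2 - q * s)]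
    · show s * exp (q * (1 - 2 * s)) ≤ 1
      have : exp (q * (1 - 2 * s)) ≤ 1 := exp_le_one_iff.2 (by nlinarith)
      nlinarith

lemma decay_le (hq0 : 0 ≤ q) (hq2 : q ≤ 1 / 2) (u : ℕ) :
    decay q u ≤ (2 - exp (-q) ^ u)⁻¹ := by
  induction u with
  | zero => norm_num [decay]
  | succ u ih =>
    have hr1 : exp (-q) ≤ 1 := exp_le_one_iff.2 (by linarith)
    have hru : exp (-q) ^ (u + 1) ≤ 1 := pow_le_one₀ (exp_nonneg _) hr1
    set x := exp (-q) ^ u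
    have hx0 : 0 ≤ x := by positivity
    have hx1 : x ≤ 1 := pow_le_one₀ (exp_nonneg _) hr1
    have hx2 : 0 < 2 - x := by linarith
    set ρ := (2 - x)⁻¹ with hρ
    have hρ1 : ρ ≤ 1 := inv_le_one_of_one_le₀ (by linarith)
    obtain ⟨hs1, hs2⟩ := decay_mem_Icc hq0 hq2 u
    have hexp : exp q * exp (-(2 * q * ρ)) = exp (-(q * x / (2 - x))) := by
      rw [← exp_add, hρ]; congr 1; field_simp; ring
    have hρx : ρ * (1 + q * x / (2 - x))⁻¹ = (2 - x + q * x)⁻¹ := by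
      rw [hρ, ← mul_inv]; congr 1; field_simp
    have hr : x * (1 - q) ≤ exp (-q) ^ (u + 1) := by
      rw [pow_succ]; exact mul_le_mul_of_nonneg_left (by linarith [one_sub_le_exp_neg q]) hx0
    calc decay q (u + 1)
        ≤ exp q * (ρ * exp (-(2 * q * ρ))) := by
          rw [decay_succ]
          exact mul_le_mul_of_nonneg_left (monotoneOn_mul_exp_neg hq0 hq2
            ⟨by linarith, hs2⟩ ⟨inv_nonneg.2 hx2.le, hρ1⟩ ih) (exp_nonneg q)
      _ = ρ * exp (-(q * x / (2 - x))) := by rw [← hexp]; ring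
      _ ≤ ρ * (1 + q * x / (2 - x))⁻¹ := by
          gcongr
          exact exp_neg_le_inv_one_add (div_nonneg (by positivity) (by linarith))
      _ ≤ (2 - exp (-q) ^ (u + 1))⁻¹ := by
          rw [hρx]
          exact inv_anti₀ (by linarith) (by nlinarith)

lemma sq_one_sub_exp_neg_le_sum_decay (hq0 : 0 < q) (hq2 : q ≤ 1 / 2) (k : ℕ) :
    (1 - exp (-(k * q))) ^ 2 ≤
      2 * q * ∑ u ∈ range k, (1 - decay q u) + q * (1 + 2 * q) / 2 := by
  set r := exp (-q)
  have hr1 : r < 1 := exp_lt_one_iff.2 (by linarith)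
  have hr2 : r ^ 2 < 1 := pow_lt_one₀ (exp_nonneg _) hr1 two_ne_zero
  have hgap : 2 * q / (1 + 2 * q) ≤ 1 - r ^ 2 := by
    have : r ^ 2 = exp (-(2 * q)) := by rw [← exp_nat_mul]; ring_nf
    have := exp_neg_le_inv_one_add (by linarith : 0 ≤ 2 * q)
    rw [show 2 * q / (1 + 2 * q) = 1 - (1 + 2 * q)⁻¹ by field_simp; ring]
    linarith
  have hgeom : ∑ u ∈ range k, q ^ 2 * (r ^ 2) ^ u ≤ q * (1 + 2 * q) / 2 := by
    calc ∑ u ∈ range k, q ^ 2 * (r ^ 2) ^ u ≤ q ^ 2 / (1 - r ^ 2) := by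
          rw [← mul_sum, div_eq_mul_one_div]
          gcongr
          simpa using geom_sum_Ico_le_of_lt_one (m := 0) (n := k) (by positivity) hr2
      _ ≤ q ^ 2 / (2 * q / (1 + 2 * q)) := by gcongr
      _ = q * (1 + 2 * q) / 2 := by field_simp
  have hdecay : ∑ u ∈ range k, 2 * q * (1 - (2 - r ^ u)⁻¹) ≤
      2 * q * ∑ u ∈ range k, (1 - decay q u) := by
    rw [mul_sum]
    gcongr with u
    exact decay_le hq0.le hq2 u
  calc (1 - exp (-(k * q))) ^ 2 = (1 - r ^ k) ^ 2 := by rw [← exp_nat_mul]; ring_nf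
    _ ≤ ∑ u ∈ range k, (2 * q * (1 - (2 - r ^ u)⁻¹) + q ^ 2 * (r ^ 2) ^ u) :=
      sq_one_sub_pow_le_sum (exp_nonneg _) (one_sub_le_exp_neg q) hr1.le k
    _ ≤ 2 * q * ∑ u ∈ range k, (1 - decay q u) + q * (1 + 2 * q) / 2 := by
      rw [sum_add_distrib]
      linarith

lemma exp_neg_sum_decay_le {ℓ : ℝ} (hq0 : 0 < q) (hq2 : q ≤ 1 / 2) (hℓ0 : 0 ≤ ℓ)
    (hℓq : ℓ * q ≤ 1 - q) (k : ℕ) :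
    exp (-(2 * q * ℓ * ∑ u ∈ range k, (1 - decay q u))) ≤
      2 * exp (-(ℓ * (1 - exp (-(k * q))) ^ 2)) := by
  have hsq := mul_le_mul_of_nonneg_left (sq_one_sub_exp_neg_le_sum_decay hq0 hq2 k) hℓ0
  have herr : ℓ * (q * (1 + 2 * q) / 2) ≤ log 2 :=
    calc ℓ * (q * (1 + 2 * q) / 2) = ℓ * q * ((1 + 2 * q) / 2) := by ring
      _ ≤ (1 - q) * ((1 + 2 * q) / 2) := by gcongr
      _ ≤ log 2 := by nlinarith [log_two_gt_d9, sq_nonneg (q - 1 / 4)]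
  calc exp (-(2 * q * ℓ * ∑ u ∈ range k, (1 - decay q u)))
      ≤ exp (log 2 - ℓ * (1 - exp (-(k * q))) ^ 2) := exp_le_exp.2 (by linarith)
    _ = 2 * exp (-(ℓ * (1 - exp (-(k * q))) ^ 2)) := by
      rw [sub_eq_add_neg, exp_add, exp_log two_pos]

end Decay

section Fibers

variable {A B : Type*} [Fintype A] [DecidableEq B] (f : A → B)

lemma two_mul_one_sub_mul_card_sub_card_image_le {R : Finset A}
    (hR : ∀ y ∈ R, ∀ z, f z = f y → z ∈ R) {t : ℝ} (ht : 1 / 2 ≤ t) (ht1 : t ≤ 1) :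
    2 * (1 - t) * ((#R : ℝ) - #(R.image f)) ≤ ∑ y ∈ R, (1 - t ^ (#{z | f z = f y} - 1)) := by
  have hmaps : ∀ y ∈ R, f y ∈ R.image f := fun y hy => mem_image_of_mem f hy
  rw [card_eq_sum_card_fiberwise hmaps, ← sum_fiberwise_of_maps_to hmaps,
    card_eq_sum_ones (R.image f)]
  push_cast
  rw [← sum_sub_distrib, mul_sum]
  refine sum_le_sum fun b hb => ?_
  obtain ⟨y₀, hy₀, rfl⟩ := mem_image.1 hb
  have hfiber : ∀ y ∈ R.filter (f · = f y₀),
      ({z | f z = f y} : Finset A) = R.filter (f · = f y₀) := by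
    intro y hy
    rw [mem_filter] at hy
    ext z
    simp only [mem_filter, mem_univ, true_and, hy.2]
    exact ⟨fun hz => ⟨hR y₀ hy₀ z hz, hz⟩, And.right⟩
  obtain ⟨j, hj⟩ : ∃ j, #(R.filter (f · = f y₀)) = j + 1 :=
    Nat.exists_eq_add_one.2 (card_pos.2 ⟨y₀, mem_filter.2 ⟨hy₀, rfl⟩⟩)
  rw [sum_congr rfl fun y hy => by rw [hfiber y hy], sum_const, nsmul_eq_mul, hj]
  push_cast
  simpa using two_mul_one_sub_mul_le ht ht1 j

end Fibers

section Partition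

variable {A B : Type*} [Fintype A] [DecidableEq A] [DecidableEq B] (f : A → B)

def blocked (U : Finset A) : Finset A := {z | z ∉ U ∧ f z ∈ U.image f}

def fresh (U : Finset A) : Finset A := {z | f z ∉ U.image f}

lemma sum_add_sum_blocked_add_sum_fresh {M : Type*} [AddCommMonoid M] (g : A → M)
    (U : Finset A) :
    ∑ x ∈ U, g x + ∑ x ∈ blocked f U, g x + ∑ x ∈ fresh f U, g x = ∑ x, g x := by
  have hU : (univ.filter fun z => f z ∈ U.image f ∧ z ∈ U) = U := by
    ext z
    simpa using fun hz => mem_image_of_mem f hz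
  have hblocked : (univ.filter fun z => f z ∈ U.image f ∧ z ∉ U) = blocked f U := by
    ext z
    simp only [blocked, mem_filter, mem_univ, true_and, and_comm]
  rw [← sum_filter_add_sum_filter_not univ (fun z => f z ∈ U.image f),
    ← sum_filter_add_sum_filter_not (univ.filter fun z => f z ∈ U.image f) (· ∈ U), filter_filter,
    filter_filter, hU, hblocked]
  rfl

lemma card_add_card_blocked_add_card_fresh (U : Finset A) :
    #U + #(blocked f U) + #(fresh f U) = Fintype.card A := by
  simpa only [← card_eq_sum_ones, card_univ] using
    sum_add_sum_blocked_add_sum_fresh f (fun _ => (1 : ℕ)) U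

lemma card_add_card_image_fresh_le [Fintype B] {U : Finset A} (hU : Set.InjOn f U) :
    Fintype.card A + #((fresh f U).image f) ≤ Fintype.card B + #(blocked f U) + #(fresh f U) := by
  have hdisj : Disjoint (U.image f) ((fresh f U).image f) := by
    rw [disjoint_left]
    intro b hb hb'
    obtain ⟨y, hy, rfl⟩ := mem_image.1 hb'
    exact (mem_filter.1 hy).2 hb
  have hB := card_le_univ (U.image f ∪ (fresh f U).image f)
  rw [card_union_of_disjoint hdisj, card_image_of_injOn hU] at hB
  have := card_add_card_blocked_add_card_fresh f U
  omega

lemma card_blocked_insert {U : Finset A} {a : A} (ha : f a ∉ U.image f) :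
    #(blocked f (insert a U)) = #(blocked f U) + (#{z | f z = f a} - 1) := by
  have hsplit : blocked f (insert a U) = blocked f U ∪ ({z | f z = f a} : Finset A).erase a := by
    ext z
    simp only [blocked, mem_filter, mem_univ, true_and, mem_union, mem_erase, mem_insert,
      image_insert, not_or]
    constructor
    · rintro ⟨⟨hza, hzU⟩, hz | hz⟩
      · exact Or.inr ⟨hza, hz⟩
      · exact Or.inl ⟨hzU, hz⟩
    · rintro (⟨hzU, hz⟩ | ⟨hza, hz⟩)
      · exact ⟨⟨by rintro rfl; exact ha hz, hzU⟩, Or.inr hz⟩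
      · exact ⟨⟨hza, fun hzU => ha (hz ▸ mem_image_of_mem f hzU)⟩, Or.inl hz⟩
  have hdisj : Disjoint (blocked f U) (({z | f z = f a} : Finset A).erase a) := by
    rw [disjoint_left]
    intro z hz hz'
    simp only [blocked, mem_filter, (mem_filter.1 (mem_of_mem_erase hz')).2] at hz
    exact ha hz.2.2
  rw [hsplit, card_union_of_disjoint hdisj, card_erase_of_mem (by simp)]

end Partition

section CollisionFreeMass

variable {A B : Type*} [DecidableEq B] (f : A → B) (P : A → ℝ)

def CollisionFree (U : Finset A) {u : ℕ} (y : Fin u → A) : Prop :=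
  (∀ i j, i ≠ j → f (y i) ≠ f (y j)) ∧ ∀ i, f (y i) ∉ U.image f

instance (U : Finset A) (u : ℕ) : DecidablePred (CollisionFree f U (u := u)) :=
  fun _ => inferInstanceAs (Decidable (_ ∧ _))

/-- The probability that sequential weighted sampling without replacement draws `y` next, given
that it has drawn `U` so far; for `U = ∅` this is `P_seq`. -/
noncomputable def seqWeight (U : Finset A) {u : ℕ} (y : Fin u → A) : ℝ :=
  ∏ t, P (y t) / (1 - ∑ a ∈ U, P a - ∑ j with j < t, P (y j))

noncomputable def collisionFreeMass [Fintype A] (U : Finset A) (u : ℕ) : ℝ :=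
  ∑ y : Fin u → A with CollisionFree f U y, seqWeight P U y

variable {f P}

lemma collisionFree_cons_iff [DecidableEq A] {U : Finset A} {u : ℕ} {a : A} {z : Fin u → A} :
    CollisionFree f U (Fin.cons a z : Fin (u + 1) → A) ↔
      f a ∉ U.image f ∧ CollisionFree f (insert a U) z := by
  simp only [CollisionFree, Fin.forall_fin_succ, Fin.cons_zero, Fin.cons_succ, ne_eq,
    not_true_eq_false, false_imp_iff, Fin.succ_ne_zero, Fin.succ_inj, image_insert, mem_insert,
    not_false_eq_true, forall_const, not_or]
  exact ⟨fun ⟨⟨⟨_, _⟩, hz⟩, ha, hzU⟩ => ⟨ha, fun i => (hz i).2, fun i => ⟨(hz i).1, hzU i⟩⟩,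
    fun ⟨ha, hz, hzU⟩ => ⟨⟨⟨trivial, fun i _ h => (hzU i).1 h.symm⟩,
      fun i => ⟨(hzU i).1, hz i⟩⟩, ha, fun i => (hzU i).2⟩⟩

lemma seqWeight_cons [DecidableEq A] {U : Finset A} {u : ℕ} {a : A} (ha : a ∉ U)
    (z : Fin u → A) :
    seqWeight P U (Fin.cons a z : Fin (u + 1) → A) =
      P a / (1 - ∑ x ∈ U, P x) * seqWeight P (insert a U) z := by
  rw [seqWeight, Fin.prod_univ_succ, seqWeight, sum_insert ha]
  congr 1
  · simp
  · refine prod_congr rfl fun t _ => ?_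
    rw [sum_filter, Fin.sum_univ_succ, sum_filter]
    simp only [Fin.cons_succ, Fin.cons_zero, Fin.succ_pos, Fin.succ_lt_succ_iff, if_true]
    ring_nf

lemma collisionFreeMass_empty [Fintype A] (k : ℕ) :
    collisionFreeMass f P ∅ k = ∑ x : Fin k → A with ∀ i j, i ≠ j → f (x i) ≠ f (x j),
      ∏ t, P (x t) / (1 - ∑ j with j < t, P (x j)) :=
  sum_congr (filter_congr fun x _ => by simp [CollisionFree]) fun x _ => by simp [seqWeight]

lemma collisionFreeMass_zero [Fintype A] (U : Finset A) : collisionFreeMass f P U 0 = 1 := by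
  simp [collisionFreeMass, seqWeight, CollisionFree]

lemma collisionFreeMass_succ [Fintype A] [DecidableEq A] (U : Finset A) (u : ℕ) :
    collisionFreeMass f P U (u + 1) =
      ∑ a ∈ fresh f U, P a / (1 - ∑ x ∈ U, P x) * collisionFreeMass f P (insert a U) u := by
  rw [collisionFreeMass, sum_filter, ← (Fin.consEquiv fun _ => A).sum_comp,
    Fintype.sum_prod_type, fresh, sum_filter]
  refine sum_congr rfl fun a _ => ?_
  simp only [Fin.consEquiv, Equiv.coe_fn_mk, collisionFree_cons_iff]
  by_cases ha : f a ∈ U.image f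
  · simp [ha]
  · have haU : a ∉ U := fun h => ha (mem_image_of_mem f h)
    rw [if_pos ha, collisionFreeMass, sum_filter, mul_sum]
    refine sum_congr rfl fun z _ => ?_
    rw [apply_ite (P a / (1 - ∑ x ∈ U, P x) * ·), mul_zero, seqWeight_cons haU]
    simp [ha]

end CollisionFreeMass

lemma one_sub_sum_pos {A : Type*} [Fintype A] {P : A → ℝ} (hP : ∀ x, 0 < P x)
    (hP1 : ∑ x, P x = 1) {U : Finset A} (hU : #U < Fintype.card A) : 0 < 1 - ∑ x ∈ U, P x := by
  obtain ⟨a, -, ha⟩ := exists_mem_notMem_of_card_lt_card (hU.trans_eq card_univ.symm)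
  have := sum_lt_sum_of_subset (subset_univ U) (mem_univ a) ha (hP a) fun j _ _ => (hP j).le
  linarith

section Bound

variable {A B : Type*} [Fintype A] [DecidableEq A] [DecidableEq B] {f : A → B} {P : A → ℝ}

lemma collisionFreeMass_le_one (hP0 : ∀ x, 0 ≤ P x) (hP1 : ∑ x, P x = 1) (u : ℕ)
    (U : Finset A) : collisionFreeMass f P U u ≤ 1 := by
  induction u generalizing U with
  | zero => rw [collisionFreeMass_zero]
  | succ u ih =>
    have hsplit := sum_add_sum_blocked_add_sum_fresh f P U
    have hblocked := sum_nonneg fun x (_ : x ∈ blocked f U) => hP0 x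
    have hfresh := sum_nonneg fun x (_ : x ∈ fresh f U) => hP0 x
    have hD : 0 ≤ 1 - ∑ x ∈ U, P x := by linarith
    rw [collisionFreeMass_succ]
    calc _ ≤ ∑ a ∈ fresh f U, P a / (1 - ∑ x ∈ U, P x) :=
          sum_le_sum fun a _ => mul_le_of_le_one_right (div_nonneg (hP0 a) hD) (ih _)
      _ = (∑ a ∈ fresh f U, P a) / (1 - ∑ x ∈ U, P x) := (sum_div ..).symm
      _ ≤ 1 := div_le_one_of_le₀ (by linarith) hD

variable [Fintype B] {q t : ℝ} {ℓ : ℕ}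

lemma le_sum_blocked_add_sum_fresh (hq0 : 0 ≤ q) (hPq : ∀ x, q ≤ P x) (ht : 1 / 2 ≤ t)
    (ht1 : t ≤ 1) (hℓ : ℓ + Fintype.card B ≤ Fintype.card A) {U : Finset A} (hU : Set.InjOn f U) :
    q * #(blocked f U) + 2 * q * (1 - t) * (ℓ - #(blocked f U)) ≤
      ∑ x ∈ blocked f U, P x + ∑ a ∈ fresh f U, P a * (1 - t ^ (#{z | f z = f a} - 1)) := by
  have hblocked : q * #(blocked f U) ≤ ∑ x ∈ blocked f U, P x := by
    simpa [mul_comm] using card_nsmul_le_sum _ P q fun x _ => hPq x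
  have hcount : (ℓ : ℝ) - #(blocked f U) ≤ #(fresh f U) - #((fresh f U).image f) := by
    have := card_add_card_image_fresh_le f hU
    have : ℓ + #((fresh f U).image f) ≤ #(blocked f U) + #(fresh f U) := by omega
    rw [sub_le_sub_iff, add_comm (#(fresh f U) : ℝ)]
    exact_mod_cast this
  have hclosed : ∀ y ∈ fresh f U, ∀ z, f z = f y → z ∈ fresh f U := by
    intro y hy z hz
    simpa [fresh, hz] using hy
  have hfibers := two_mul_one_sub_mul_card_sub_card_image_le f hclosed ht ht1
  have hweights : q * ∑ a ∈ fresh f U, (1 - t ^ (#{z | f z = f a} - 1)) ≤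
      ∑ a ∈ fresh f U, P a * (1 - t ^ (#{z | f z = f a} - 1)) := by
    rw [mul_sum]
    exact sum_le_sum fun a _ => mul_le_mul_of_nonneg_right (hPq a)
      (sub_nonneg.2 (pow_le_one₀ (by linarith) ht1))
  linarith [mul_le_mul_of_nonneg_left hcount
      (mul_nonneg (mul_nonneg zero_le_two hq0) (sub_nonneg.2 ht1)),
    mul_le_mul_of_nonneg_left hfibers hq0]

lemma sum_fresh_mul_pow_div_le (hq0 : 0 < q) (hPq : ∀ x, q ≤ P x) (hP1 : ∑ x, P x = 1)
    (ht : 1 / 2 ≤ t) (ht1 : t ≤ 1) (hℓ : ℓ + Fintype.card B ≤ Fintype.card A) {U : Finset A}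
    (hU : Set.InjOn f U) (hUcard : #U < Fintype.card A) :
    (∑ a ∈ fresh f U, P a * t ^ (#{z | f z = f a} - 1)) / (1 - ∑ x ∈ U, P x) ≤
      exp (-(q * #(blocked f U) + 2 * q * (1 - t) * (ℓ - #(blocked f U)))) := by
  have hP0 : ∀ x, 0 ≤ P x := fun x => hq0.le.trans (hPq x)
  have hD := one_sub_sum_pos (fun x => hq0.trans_le (hPq x)) hP1 hUcard
  have hsplit := sum_add_sum_blocked_add_sum_fresh f P U
  have hdeficit : 0 ≤ ∑ a ∈ fresh f U, P a * (1 - t ^ (#{z | f z = f a} - 1)) :=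
    sum_nonneg fun a _ => mul_nonneg (hP0 a) (sub_nonneg.2 (pow_le_one₀ (by linarith) ht1))
  have hfresh : ∑ a ∈ fresh f U, P a * t ^ (#{z | f z = f a} - 1) =
      ∑ a ∈ fresh f U, P a - ∑ a ∈ fresh f U, P a * (1 - t ^ (#{z | f z = f a} - 1)) := by
    rw [← sum_sub_distrib]
    exact sum_congr rfl fun a _ => by ring
  calc _ = ((1 - ∑ x ∈ U, P x) - (∑ x ∈ blocked f U, P x +
        ∑ a ∈ fresh f U, P a * (1 - t ^ (#{z | f z = f a} - 1)))) / (1 - ∑ x ∈ U, P x) := by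
        rw [hfresh]; congr 1; linarith
    _ ≤ exp (-(∑ x ∈ blocked f U, P x +
        ∑ a ∈ fresh f U, P a * (1 - t ^ (#{z | f z = f a} - 1)))) :=
      sub_div_le_exp_neg hD (by linarith [sum_nonneg fun x (_ : x ∈ U) => hP0 x])
        (add_nonneg (sum_nonneg fun x _ => hP0 x) hdeficit)
    _ ≤ _ := exp_le_exp.2 (neg_le_neg (le_sum_blocked_add_sum_fresh hq0.le hPq ht ht1 hℓ hU))

lemma collisionFreeMass_le (hq0 : 0 < q) (hq2 : q ≤ 1 / 2) (hPq : ∀ x, q ≤ P x)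
    (hP1 : ∑ x, P x = 1) (hℓ : ℓ + Fintype.card B ≤ Fintype.card A) (u : ℕ) (U : Finset A)
    (hU : Set.InjOn f U) (hUu : #U + u ≤ Fintype.card A) :
    collisionFreeMass f P U u ≤
      decay q u ^ #(blocked f U) * exp (-(2 * q * ℓ * ∑ v ∈ range u, (1 - decay q v))) := by
  induction u generalizing U with
  | zero => simp [collisionFreeMass_zero, decay]
  | succ u ih =>
    obtain ⟨hs1, hs2⟩ := decay_mem_Icc hq0.le hq2 u
    set s := decay q u
    set E := exp (-(2 * q * ℓ * ∑ v ∈ range u, (1 - decay q v)))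
    set D := 1 - ∑ x ∈ U, P x
    have hD := one_sub_sum_pos (fun x => hq0.trans_le (hPq x)) hP1 (by omega : #U < _)
    have hstep : ∀ a ∈ fresh f U, P a / D * collisionFreeMass f P (insert a U) u ≤
        s ^ #(blocked f U) * E / D * (P a * s ^ (#{z | f z = f a} - 1)) := by
      intro a ha
      replace ha : f a ∉ U.image f := (mem_filter.1 ha).2
      have haU : a ∉ U := fun h => ha (mem_image_of_mem f h)
      have hinj : Set.InjOn f ↑(insert a U) := by
        rw [coe_insert, Set.injOn_insert (mem_coe.not.2 haU), ← coe_image, mem_coe]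
        exact ⟨hU, ha⟩
      have := ih (insert a U) hinj (by rw [card_insert_of_notMem haU]; omega)
      rw [card_blocked_insert f ha, pow_add] at this
      calc P a / D * collisionFreeMass f P (insert a U) u
          ≤ P a / D * (s ^ #(blocked f U) * s ^ (#{z | f z = f a} - 1) * E) :=
            mul_le_mul_of_nonneg_left this (div_nonneg (hq0.le.trans (hPq a)) hD.le)
        _ = _ := by ring
    calc collisionFreeMass f P U (u + 1)
        ≤ ∑ a ∈ fresh f U,
            s ^ #(blocked f U) * E / D * (P a * s ^ (#{z | f z = f a} - 1)) := by
          rw [collisionFreeMass_succ]; exact sum_le_sum hstep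
      _ = s ^ #(blocked f U) * E *
          ((∑ a ∈ fresh f U, P a * s ^ (#{z | f z = f a} - 1)) / D) := by
          rw [← mul_sum]; ring
      _ ≤ s ^ #(blocked f U) * E *
          exp (-(q * #(blocked f U) + 2 * q * (1 - s) * (ℓ - #(blocked f U)))) := by
          gcongr
          exact sum_fresh_mul_pow_div_le hq0 hPq hP1 hs1 hs2 hℓ hU (by omega)
      _ = _ := by
          rw [decay, mul_pow, ← exp_nat_mul, sum_range_succ]
          simp only [E, mul_assoc, ← exp_add]
          congr 2
          ring

end Bound

theorem duplicate_detection_sequential_general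
    {A B : Type*} [Fintype A] [DecidableEq A] [Fintype B] [DecidableEq B]
    (f : A → B)
    (n ℓ : ℕ) (hn : Fintype.card A = n)
    (hℓn : ℓ ≤ n) (hB : Fintype.card B = n - ℓ)
    (c : ℝ) (hc : 0 ≤ c)
    (Pdist : A → ℝ) (hP0 : ∀ x, 0 ≤ Pdist x) (hP1 : ∑ x, Pdist x = 1)
    (hPlb : ∀ x, 1 / ((n : ℝ) * (1 + c)) ≤ Pdist x)
    (k : ℕ) (hkn : k ≤ n)
    (Pseq : (Fin k → A) → ℝ)
    (hPseq : ∀ x : Fin k → A, Pseq x =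
      ∏ t, Pdist (x t) /
        (1 - ∑ j ∈ (Finset.univ.filter fun j : Fin k => j < t), Pdist (x j))) :
    (∑ x ∈ (Finset.univ.filter fun x : Fin k → A =>
        ∀ i j : Fin k, i ≠ j → f (x i) ≠ f (x j)), Pseq x) ≤
      2 * Real.exp (-(ℓ : ℝ) *
        (1 - Real.exp (-(k : ℝ) / ((n : ℝ) * (1 + c)))) ^ 2) ∧
    2 * Real.exp (-(ℓ : ℝ) *
        (1 - Real.exp (-(k : ℝ) / ((n : ℝ) * (1 + c)))) ^ 2) ≤
      2 * Real.exp (-((k : ℝ) ^ 2 * (ℓ : ℝ)) /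
        (4 * (n : ℝ) ^ 2 * (1 + c) ^ 2)) := by
  set q := 1 / ((n : ℝ) * (1 + c)) with hq
  have hk : -(k : ℝ) / ((n : ℝ) * (1 + c)) = -(k * q) := by ring
  have hnc : (n : ℝ) ≤ n * (1 + c) := le_mul_of_one_le_right n.cast_nonneg (by linarith)
  have hkq : k * q ≤ 1 := by
    rw [mul_one_div]
    exact div_le_one_of_le₀ ((Nat.cast_le.2 hkn).trans hnc) (n.cast_nonneg.trans hnc)
  rw [hk]
  refine ⟨?_, ?_⟩
  · rw [sum_congr rfl fun x _ => hPseq x, ← collisionFreeMass_empty]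
    rcases Nat.eq_zero_or_pos ℓ with rfl | hℓ
    · simpa using (collisionFreeMass_le_one hP0 hP1 k ∅).trans one_le_two
    obtain ⟨a⟩ : Nonempty A := Fintype.card_pos_iff.1 (by omega)
    have hB0 : 0 < Fintype.card B := Fintype.card_pos_iff.2 ⟨f a⟩
    have hℓn1 : (ℓ : ℝ) + 1 ≤ n := by exact_mod_cast (by omega : ℓ + 1 ≤ n)
    have hℓ1 : (1 : ℝ) ≤ ℓ := by exact_mod_cast hℓ
    have hq0 : 0 < q := one_div_pos.2 (by linarith)
    have hq2 : q ≤ 1 / 2 := one_div_le_one_div_of_le two_pos (by linarith)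
    have hℓq : ℓ * q ≤ 1 - q := by
      have : ((ℓ : ℝ) + 1) * q ≤ 1 := by
        rw [mul_one_div]; exact div_le_one_of_le₀ (by linarith) (by linarith)
      linarith
    calc collisionFreeMass f Pdist ∅ k
        ≤ exp (-(2 * q * ℓ * ∑ v ∈ range k, (1 - decay q v))) := by
          simpa [blocked] using collisionFreeMass_le hq0 hq2 hPlb hP1 (by omega) k ∅
            (by simp) (by simp [hn, hkn])
      _ ≤ 2 * exp (-(ℓ * (1 - exp (-(k * q))) ^ 2)) :=
          exp_neg_sum_decay_le hq0 hq2 ℓ.cast_nonneg hℓq k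
      _ = _ := by rw [neg_mul]
  · have hhalf := half_le_one_sub_exp_neg (by positivity) hkq
    gcongr
    have hsq : -((k : ℝ) ^ 2 * ℓ) / (4 * n ^ 2 * (1 + c) ^ 2) = -(ℓ * (k * q / 2) ^ 2) := by
      rw [hq, show (4 : ℝ) * n ^ 2 * (1 + c) ^ 2 = 4 * (n * (1 + c)) ^ 2 by ring]
      generalize (n : ℝ) * (1 + c) = X
      ring
    rw [hsq, neg_mul, neg_le_neg_iff]
    gcongr

/-- **Duplicate-detection bound under sequential weighted sampling without
replacement.**
Let `A` be a finite set of size `n ≥ 1`, `f : A → B` a map into a finite set of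
size `n − ℓ`, `c ≥ 0`, and `Pdist` a probability distribution on `A` with
`1/(n(1+c)) ≤ Pdist(x) ≤ (1+c)/n`, and let `1 ≤ k ≤ n`.  Under sequential
weighted sampling without replacement, the mass of an injective tuple
`x : Fin k → A` is `P_seq(x) = ∏ t, Pdist(x t) / (1 − ∑_{j<t} Pdist(x j))`.
The probability of the event `E_k^seq = {∀ i ≠ j, f(X_i) ≠ f(X_j)}` — the sum
of `P_seq` over all tuples whose `f`-values are pairwise distinct (all such
tuples are injective) — is at most
`2·exp(−ℓ(1 − exp(−k/(n(1+c))))²) ≤ 2·exp(−k²ℓ/(4n²(1+c)²))`. -/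
theorem duplicate_detection_sequential
    {A B : Type*} [Fintype A] [DecidableEq A] [Fintype B] [DecidableEq B]
    (f : A → B)
    (n ℓ : ℕ) (hn : Fintype.card A = n) (hn1 : 1 ≤ n)
    (hℓn : ℓ ≤ n) (hB : Fintype.card B = n - ℓ)
    (c : ℝ) (hc : 0 ≤ c)
    (Pdist : A → ℝ) (hP0 : ∀ x, 0 ≤ Pdist x) (hP1 : ∑ x, Pdist x = 1)
    (hPlb : ∀ x, 1 / ((n : ℝ) * (1 + c)) ≤ Pdist x)
    (hPub : ∀ x, Pdist x ≤ (1 + c) / (n : ℝ))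
    (k : ℕ) (hk1 : 1 ≤ k) (hkn : k ≤ n)
    (Pseq : (Fin k → A) → ℝ)
    (hPseq : ∀ x : Fin k → A, Pseq x =
      ∏ t, Pdist (x t) /
        (1 - ∑ j ∈ (Finset.univ.filter fun j : Fin k => j < t), Pdist (x j))) :
    (∑ x ∈ (Finset.univ.filter fun x : Fin k → A =>
        ∀ i j : Fin k, i ≠ j → f (x i) ≠ f (x j)), Pseq x) ≤
      2 * Real.exp (-(ℓ : ℝ) *
        (1 - Real.exp (-(k : ℝ) / ((n : ℝ) * (1 + c)))) ^ 2) ∧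
    2 * Real.exp (-(ℓ : ℝ) *
        (1 - Real.exp (-(k : ℝ) / ((n : ℝ) * (1 + c)))) ^ 2) ≤
      2 * Real.exp (-((k : ℝ) ^ 2 * (ℓ : ℝ)) /
        (4 * (n : ℝ) ^ 2 * (1 + c) ^ 2)) :=
  duplicate_detection_sequential_general f n ℓ hn hℓn hB c hc Pdist hP0 hP1 hPlb k hkn Pseq hPseq
end
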